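/- arXiv:1912.02516 — 6 statements merged into one kernel-verified Lean document; each statement's English description precedes it below -/
import Mathlib

section
/- Let β > 1 and H = βL_p. Let x ∈ dom h and let T be a minimizer over E of y ↦ Ω_p(f,x;y) + (H/(p+1)!)‖y−x‖^{p+1} + h(y), and set F'(T) = ∇f(T) − ∇Ω_p(f,x;T) − (H/p!)‖T−x‖^{p−1}(T−x). Then ⟨F'(T), x − T⟩ ≥ (p!/((p+1)L_p))^{1/p} · ‖F'(T)‖^{(p+1)/p} · ((β²−1)^{(p−1)/(2p)}/β) · (p/(p²−1)^{(p−1)/(2p)}). -/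
/-!
Write `d = T - x`, `r = ‖d‖`, `c = H r^(p-1) / p!` and `g = ∇f(T) - ∇Ω_p(f,x;T)`, so that
`F'(T) = g - c d`. Taylor's theorem for `y ↦ Df(y)[v]` along the segment `[x, T]`, with the
Lipschitz bound on `D^p f`, gives `‖g‖ ≤ L_p r^p / p! = c r / β`; identifying `∇Ω_p(f,x;T)` with the
Taylor expansion of `∇f` uses the symmetry of the iterated derivatives of `f`. Expanding
`‖g - c d‖²` then gives
`⟨F'(T), x - T⟩ ≥ p! ‖F'(T)‖² / (2 β L_p r^(p-1)) + (β² - 1) L_p r^(p+1) / (2 β p!)`,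
and weighted AM-GM with weights `(p+1)/(2p)` and `(p-1)/(2p)` eliminates `r`.
-/

open scoped RealInnerProductSpace

/-- The `p`-th order Taylor polynomial `Ω_p(f,x;y)` of `f` at `x`, evaluated at `y`. -/
noncomputable def OmegaTaylor {E : Type*} [NormedAddCommGroup E] [InnerProductSpace ℝ E]
    (p : ℕ) (f : E → ℝ) (x y : E) : ℝ :=
  ∑ k ∈ Finset.range (p + 1),
    (1 / (Nat.factorial k : ℝ)) * iteratedFDeriv ℝ k f x (fun _ => y - x)

open scoped Nat
open Set Function

theorem Fin.snoc_const_self {α : Type*} {n : ℕ} (a : α) :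
    Fin.snoc (fun _ : Fin n => a) a = fun _ => a :=
  Fin.snoc_init_self (α := fun _ => α) (fun _ => a)

theorem Fin.update_const_last {α : Type*} {n : ℕ} (a b : α) :
    update (fun _ : Fin (n + 1) => a) (Fin.last n) b = Fin.snoc (fun _ => a) b := by
  conv_lhs => rw [← Fin.snoc_const_self a]
  exact Fin.update_snoc_last _ _ _

section IteratedFDeriv

variable {𝕜 : Type*} [NontriviallyNormedField 𝕜] {E F : Type*} [NormedAddCommGroup E]
  [NormedSpace 𝕜 E] [NormedAddCommGroup F] [NormedSpace 𝕜 F]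

theorem ContDiffAt.fderiv_apply_const {f : E → F} {z : E} {n : WithTop ℕ∞}
    (hf : ContDiffAt 𝕜 (n + 1) f z) (w : E) : ContDiffAt 𝕜 n (fun y => fderiv 𝕜 f y w) z :=
  (hf.fderiv_right le_rfl).clm_apply contDiffAt_const

theorem iteratedFDeriv_fderiv_apply {f : E → F} {z : E} {k : ℕ}
    (hf : ContDiffAt 𝕜 (k + 1) f z) (w : E) (m : Fin k → E) :
    iteratedFDeriv 𝕜 k (fun y => fderiv 𝕜 f y w) z m =
      iteratedFDeriv 𝕜 (k + 1) f z (Fin.snoc m w) := by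
  rw [iteratedFDeriv_succ_apply_right, Fin.init_snoc, Fin.snoc_last,
    show (fun y => fderiv 𝕜 f y w) = ContinuousLinearMap.apply 𝕜 F w ∘ fderiv 𝕜 f from rfl,
    ContinuousLinearMap.iteratedFDeriv_comp_left _ (hf.fderiv_right le_rfl) le_rfl]
  rfl

end IteratedFDeriv

section Symmetry

variable {𝕜 : Type*} [RCLike 𝕜] {E F : Type*} [NormedAddCommGroup E] [NormedSpace 𝕜 E]
  [NormedAddCommGroup F] [NormedSpace 𝕜 F]

theorem iteratedFDeriv_snoc_snoc_comm {f : E → F} {z : E} {k : ℕ}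
    (hf : ContDiffAt 𝕜 (k + 2) f z) (m : Fin k → E) (a b : E) :
    iteratedFDeriv 𝕜 (k + 2) f z (Fin.snoc (Fin.snoc m a) b) =
      iteratedFDeriv 𝕜 (k + 2) f z (Fin.snoc (Fin.snoc m b) a) := by
  have hC2 : ∀ᶠ y in nhds z, ContDiffAt 𝕜 2 f y := (hf.of_le le_add_self).eventually (by simp)
  have hsnd : ∀ a b : E, iteratedFDeriv 𝕜 (k + 2) f z (Fin.snoc (Fin.snoc m a) b) =
      iteratedFDeriv 𝕜 k (fun y => fderiv 𝕜 (fderiv 𝕜 f) y a b) z m := by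
    intro a b
    have hsecond : (fun y => fderiv 𝕜 (fun y => fderiv 𝕜 f y b) y a) =ᶠ[nhds z]
        (fun y => fderiv 𝕜 (fderiv 𝕜 f) y a b) := by
      filter_upwards [hC2] with y hy
      rw [fderiv_clm_apply ((hy.fderiv_right one_add_one_eq_two.le).differentiableAt one_ne_zero)
        (differentiableAt_const b)]
      simp
    rw [← iteratedFDeriv_fderiv_apply hf, ← iteratedFDeriv_fderiv_apply (hf.fderiv_apply_const b),
      (hsecond.iteratedFDeriv 𝕜 k).eq_of_nhds]
  have hsymm : (fun y => fderiv 𝕜 (fderiv 𝕜 f) y a b) =ᶠ[nhds z]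
      (fun y => fderiv 𝕜 (fderiv 𝕜 f) y b a) := by
    filter_upwards [hC2] with y hy
    exact (hy.isSymmSndFDerivAt (by simp)).eq a b
  rw [hsnd, hsnd, (hsymm.iteratedFDeriv 𝕜 k).eq_of_nhds]

theorem iteratedFDeriv_update_const_eq_snoc {k : ℕ} {f : E → F} {z : E}
    (hf : ContDiffAt 𝕜 (k + 1) f z) (d v : E) (i : Fin (k + 1)) :
    iteratedFDeriv 𝕜 (k + 1) f z (update (fun _ => d) i v) =
      iteratedFDeriv 𝕜 (k + 1) f z (Fin.snoc (fun _ => d) v) := by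
  induction i using Fin.lastCases with
  | last => rw [Fin.update_const_last]
  | cast i =>
    cases k with
    | zero => exact i.elim0
    | succ k =>
      rw [← Fin.snoc_const_self d, ← Fin.snoc_update, ← iteratedFDeriv_fderiv_apply hf,
        iteratedFDeriv_update_const_eq_snoc (hf.fderiv_apply_const d),
        iteratedFDeriv_fderiv_apply hf, iteratedFDeriv_snoc_snoc_comm hf, Fin.snoc_const_self]

theorem sum_iteratedFDeriv_update_const {k : ℕ} {f : E → F} {z : E}
    (hf : ContDiffAt 𝕜 (k + 1) f z) (d v : E) :
    ∑ i : Fin (k + 1), iteratedFDeriv 𝕜 (k + 1) f z (update (fun _ => d) i v) =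
      (k + 1) • iteratedFDeriv 𝕜 k (fun y => fderiv 𝕜 f y v) z (fun _ => d) := by
  simp [iteratedFDeriv_update_const_eq_snoc hf, iteratedFDeriv_fderiv_apply hf]

end Symmetry

section Taylor

theorem hasDerivAt_pow_succ_div_factorial (k : ℕ) (t : ℝ) :
    HasDerivAt (fun s : ℝ => s ^ (k + 1) / (k + 1)!) (t ^ k / k !) t := by
  refine ((hasDerivAt_pow (k + 1) t).div_const ((k + 1)! : ℝ)).congr_deriv ?_
  rw [Nat.factorial_succ, Nat.cast_mul, Nat.add_sub_cancel]
  field_simp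

theorem hasDerivAt_sum_mul_pow_div_factorial (c : ℕ → ℝ) (m : ℕ) (t : ℝ) :
    HasDerivAt (fun s => ∑ i ∈ Finset.range (m + 1), c i * (s ^ i / i !))
      (∑ i ∈ Finset.range m, c (i + 1) * (t ^ i / i !)) t := by
  simp_rw [Finset.sum_range_succ' _ m]
  simp only [pow_zero, Nat.factorial_zero, Nat.cast_one, div_one, mul_one]
  exact (HasDerivAt.fun_sum fun i _ =>
    (hasDerivAt_pow_succ_div_factorial i t).const_mul (c (i + 1))).add_const _

theorem abs_sub_taylor_le_of_abs_sub_le {b M : ℝ} (n : ℕ) {g : ℕ → ℝ → ℝ}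
    (hg : ∀ j < n, ∀ t ∈ Icc 0 b, HasDerivAt (g j) (g (j + 1) t) t)
    (htop : ∀ t ∈ Icc 0 b, |g n t - g n 0| ≤ M * t) {t : ℝ} (ht : t ∈ Icc 0 b) :
    |g 0 t - ∑ i ∈ Finset.range (n + 1), g i 0 * (t ^ i / i !)| ≤
      M * (t ^ (n + 1) / (n + 1)!) := by
  induction n generalizing g t with
  | zero => simpa using htop t ht
  | succ n ih =>
    have hderiv : ∀ s ∈ Icc 0 b, HasDerivAt
        (fun s => g 0 s - ∑ i ∈ Finset.range (n + 2), g i 0 * (s ^ i / i !))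
        (g 1 s - ∑ i ∈ Finset.range (n + 1), g (i + 1) 0 * (s ^ i / i !)) s := fun s hs =>
      (hg 0 n.succ_pos s hs).sub (hasDerivAt_sum_mul_pow_div_factorial (g · 0) (n + 1) s)
    refine image_norm_le_of_norm_deriv_right_le_deriv_boundary
      (fun s hs => (hderiv s hs).continuousAt.continuousWithinAt)
      (fun s hs => (hderiv s (Ico_subset_Icc_self hs)).hasDerivWithinAt)
      (by simp [Finset.sum_range_succ'])
      (fun s => (hasDerivAt_pow_succ_div_factorial (n + 1) s).const_mul M)
      (fun s hs => ih (g := fun j => g (j + 1)) (fun j hj => hg (j + 1) (by omega)) htop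
        (Ico_subset_Icc_self hs)) ht

theorem hasDerivAt_iteratedFDeriv_add_smul_apply {E F : Type*} [NormedAddCommGroup E]
    [NormedSpace ℝ E] [NormedAddCommGroup F] [NormedSpace ℝ F] {g : E → F} {x d : E} {t : ℝ}
    {j : ℕ} (hg : ContDiffAt ℝ (j + 1) g (x + t • d)) :
    HasDerivAt (fun s : ℝ => iteratedFDeriv ℝ j g (x + s • d) (fun _ => d))
      (iteratedFDeriv ℝ (j + 1) g (x + t • d) (fun _ => d)) t := by
  have hdiff : DifferentiableAt ℝ (iteratedFDeriv ℝ j g) (x + t • d) :=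
    hg.differentiableAt_iteratedFDeriv (by exact_mod_cast j.lt_succ_self)
  have hline : HasDerivAt (fun s : ℝ => x + s • d) d t := by
    simpa using ((hasDerivAt_id t).smul_const d).const_add x
  exact (hdiff.hasFDerivAt.continuousMultilinear_apply_const _).comp_hasDerivAt t hline

end Taylor

section OmegaTaylor

variable {E : Type*} [NormedAddCommGroup E] [InnerProductSpace ℝ E]

theorem fderiv_omegaTaylor_apply {f : E → ℝ} {p : ℕ} {x : E} (hf : ContDiffAt ℝ p f x)
    (T v : E) :
    fderiv ℝ (OmegaTaylor p f x) T v =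
      ∑ k ∈ Finset.range p, 1 / (k ! : ℝ) *
        iteratedFDeriv ℝ k (fun y => fderiv ℝ f y v) x (fun _ => T - x) := by
  have hterm : ∀ k, HasFDerivAt (fun y => iteratedFDeriv ℝ k f x (fun _ => y - x))
      (∑ i : Fin k, (iteratedFDeriv ℝ k f x).toContinuousLinearMap (fun _ => T - x) i
        ∘L ContinuousLinearMap.id ℝ E) T :=
    fun k => HasFDerivAt.multilinear_comp _ fun _ => (hasFDerivAt_id T).sub_const x
  have hΩ := HasFDerivAt.fun_sum fun k (_ : k ∈ Finset.range (p + 1)) =>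
    (hterm k).const_mul (1 / (k ! : ℝ))
  unfold OmegaTaylor
  rw [hΩ.fderiv, sum_apply, Finset.sum_range_succ']
  simp only [smul_apply, sum_apply, ContinuousLinearMap.coe_comp, comp_apply,
    ContinuousLinearMap.coe_id', id_eq, ContinuousMultilinearMap.toContinuousLinearMap_apply]
  rw [Finset.univ_eq_empty, Finset.sum_empty, smul_zero, add_zero]
  refine Finset.sum_congr rfl fun k hk => ?_
  have hk : (k + 1 : WithTop ℕ∞) ≤ p := by exact_mod_cast Finset.mem_range.mp hk
  rw [sum_iteratedFDeriv_update_const (hf.of_le hk), smul_eq_mul, nsmul_eq_mul,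
    Nat.factorial_succ, Nat.cast_mul]
  field_simp

theorem abs_fderiv_sub_fderiv_omegaTaylor_le {f : E → ℝ} {s : Set E} (hs : Convex ℝ s) {p : ℕ}
    (hp : 1 ≤ p) (hf : ∀ z ∈ s, ContDiffAt ℝ p f z) {L : ℝ}
    (hLip : ∀ z ∈ s, ∀ w ∈ s, ‖iteratedFDeriv ℝ p f z - iteratedFDeriv ℝ p f w‖ ≤ L * ‖z - w‖)
    {x T : E} (hx : x ∈ s) (hT : T ∈ s) (v : E) :
    |fderiv ℝ f T v - fderiv ℝ (OmegaTaylor p f x) T v| ≤ L * ‖T - x‖ ^ p * ‖v‖ / p ! := by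
  obtain ⟨n, rfl⟩ : ∃ n, p = n + 1 := ⟨p - 1, by omega⟩
  set d := T - x
  have hseg : ∀ t ∈ Icc (0 : ℝ) 1, x + t • d ∈ s := fun t ht => hs.add_smul_sub_mem hx hT ht
  have hfseg : ∀ t ∈ Icc (0 : ℝ) 1, ContDiffAt ℝ (n + 1) f (x + t • d) := fun t ht => by
    exact_mod_cast hf _ (hseg t ht)
  let g : ℕ → ℝ → ℝ := fun j t =>
    iteratedFDeriv ℝ j (fun y => fderiv ℝ f y v) (x + t • d) (fun _ => d)
  have hg : ∀ j < n, ∀ t ∈ Icc (0 : ℝ) 1, HasDerivAt (g j) (g (j + 1) t) t := fun j hj t ht =>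
    hasDerivAt_iteratedFDeriv_add_smul_apply
      (((hfseg t ht).fderiv_apply_const v).of_le (by exact_mod_cast hj))
  have htop : ∀ t ∈ Icc (0 : ℝ) 1, |g n t - g n 0| ≤ L * ‖d‖ ^ (n + 1) * ‖v‖ * t := by
    intro t ht
    have hdiff : g n t - g n 0 = (iteratedFDeriv ℝ (n + 1) f (x + t • d)
        - iteratedFDeriv ℝ (n + 1) f x) (Fin.snoc (fun _ => d) v) := by
      simp only [g, sub_apply]
      rw [iteratedFDeriv_fderiv_apply (hfseg t ht),
        iteratedFDeriv_fderiv_apply (by simpa using hfseg 0 (by simp)), zero_smul, add_zero]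
    have hprod : ∏ i, ‖(Fin.snoc (fun _ => d) v : Fin (n + 1) → E) i‖ = ‖d‖ ^ n * ‖v‖ := by
      simp [Fin.prod_univ_castSucc]
    have hdist : ‖(x + t • d) - x‖ = t * ‖d‖ := by
      rw [add_sub_cancel_left, norm_smul, Real.norm_of_nonneg ht.1]
    rw [hdiff, ← Real.norm_eq_abs]
    calc _ ≤ ‖iteratedFDeriv ℝ (n + 1) f (x + t • d) - iteratedFDeriv ℝ (n + 1) f x‖
          * (‖d‖ ^ n * ‖v‖) := hprod ▸ ContinuousMultilinearMap.le_opNorm _ _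
      _ ≤ L * ‖(x + t • d) - x‖ * (‖d‖ ^ n * ‖v‖) :=
          mul_le_mul_of_nonneg_right (hLip _ (hseg t ht) x hx) (by positivity)
      _ = L * ‖d‖ ^ (n + 1) * ‖v‖ * t := by rw [hdist]; ring
  calc |fderiv ℝ f T v - fderiv ℝ (OmegaTaylor (n + 1) f x) T v|
      = |g 0 1 - ∑ i ∈ Finset.range (n + 1), g i 0 * (1 ^ i / i !)| := by
        simp [fderiv_omegaTaylor_apply (hf x hx), g, d, mul_comm]
    _ ≤ L * ‖d‖ ^ (n + 1) * ‖v‖ * (1 ^ (n + 1) / (n + 1)!) :=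
        abs_sub_taylor_le_of_abs_sub_le n hg htop (by simp)
    _ = L * ‖T - x‖ ^ (n + 1) * ‖v‖ / (n + 1)! := by rw [one_pow, mul_one_div]

theorem norm_gradient_sub_gradient_omegaTaylor_le [CompleteSpace E] {f : E → ℝ} {s : Set E}
    (hs : Convex ℝ s) {p : ℕ} (hp : 1 ≤ p) (hf : ∀ z ∈ s, ContDiffAt ℝ p f z) {L : ℝ}
    (hL : 0 ≤ L)
    (hLip : ∀ z ∈ s, ∀ w ∈ s, ‖iteratedFDeriv ℝ p f z - iteratedFDeriv ℝ p f w‖ ≤ L * ‖z - w‖)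
    {x T : E} (hx : x ∈ s) (hT : T ∈ s) :
    ‖gradient f T - gradient (OmegaTaylor p f x) T‖ ≤ L * ‖T - x‖ ^ p / p ! := by
  rw [gradient, gradient, ← map_sub, LinearIsometryEquiv.norm_map]
  refine ContinuousLinearMap.opNorm_le_bound _ (by positivity) fun v => ?_
  rw [sub_apply, Real.norm_eq_abs, div_mul_eq_mul_div]
  exact abs_fderiv_sub_fderiv_omegaTaylor_le hs hp hf hLip hx hT v

end OmegaTaylor

section Inequalities

theorem rpow_bound_le_div_pow_add_mul_pow {p : ℕ} (hp : 2 ≤ p) {L β N r : ℝ} (hL : 0 < L)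
    (hβ : 1 < β) (hN : 0 ≤ N) (hr : 0 < r) :
    ((p ! : ℝ) / ((p + 1) * L)) ^ ((1 : ℝ) / p) * N ^ (((p : ℝ) + 1) / p)
        * ((β ^ 2 - 1) ^ (((p : ℝ) - 1) / (2 * p)) / β)
        * (p / ((p : ℝ) ^ 2 - 1) ^ (((p : ℝ) - 1) / (2 * p)))
      ≤ p ! * N ^ 2 / (2 * β * L * r ^ (p - 1))
        + (β ^ 2 - 1) * L * r ^ (p + 1) / (2 * β * p !) := by
  have hp2 : (2 : ℝ) ≤ p := by exact_mod_cast hp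
  have hβ2 : 0 < β ^ 2 - 1 := by nlinarith
  have hp2' : 0 < (p : ℝ) ^ 2 - 1 := by nlinarith
  rcases hN.eq_or_lt with rfl | hN
  · rw [Real.zero_rpow (by positivity), mul_zero, zero_mul, zero_mul, zero_pow two_ne_zero,
      mul_zero, zero_div, zero_add]
    positivity
  set A := (β ^ 2 - 1) * L * r ^ (p + 1) / (2 * β * p !) with hA
  set B := p ! * N ^ 2 / (2 * β * L * r ^ (p - 1)) with hB
  set θ : ℝ := ((p : ℝ) - 1) / (2 * p) with hθ
  have hθ1 : 1 - θ = ((p : ℝ) + 1) / (2 * p) := by rw [hθ]; field_simp; ring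
  have hθpos : 0 < θ := by rw [hθ]; apply div_pos <;> linarith
  have hθ1pos : 0 < 1 - θ := by rw [hθ1]; positivity
  have hamgm : (A / θ) ^ θ * (B / (1 - θ)) ^ (1 - θ) ≤ A + B := by
    have := Real.geom_mean_le_arith_mean2_weighted hθpos.le hθ1pos.le
      (by positivity : 0 ≤ A / θ) (by positivity : 0 ≤ B / (1 - θ)) (add_sub_cancel θ 1)
    rwa [mul_div_cancel₀ _ hθpos.ne', mul_div_cancel₀ _ hθ1pos.ne'] at this
  refine le_of_eq_of_le ?_ (hamgm.trans_eq (add_comm A B))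
  apply Real.log_injOn_pos (Set.mem_Ioi.2 (by positivity)) (Set.mem_Ioi.2 (by positivity))
  rw [hA, hB, hθ1, show ((p : ℝ) ^ 2 - 1) = ((p : ℝ) - 1) * ((p : ℝ) + 1) by ring, hθ]
  have hp_sub_one : (0 : ℝ) < p - 1 := by linarith
  simp (disch := positivity) only [Real.log_mul, Real.log_div, Real.log_rpow, Real.log_pow]
  rw [Nat.cast_sub (by omega : 1 ≤ p)]
  push_cast
  field_simp
  ring

variable {F : Type*} [NormedAddCommGroup F] [InnerProductSpace ℝ F]

theorem le_inner_sub_smul_neg {g d : F} {c ρ : ℝ} (hc : 0 < c) (hg : ‖g‖ ≤ ρ) :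
    (‖g - c • d‖ ^ 2 + c ^ 2 * ‖d‖ ^ 2 - ρ ^ 2) / (2 * c) ≤ ⟪g - c • d, -d⟫ := by
  have hg2 : ‖g‖ ^ 2 ≤ ρ ^ 2 := pow_le_pow_left₀ (norm_nonneg g) hg 2
  rw [div_le_iff₀ (by positivity), norm_sub_sq_real, inner_neg_right, inner_sub_left,
    real_inner_smul_right, real_inner_smul_left, real_inner_self_eq_norm_sq, norm_smul,
    Real.norm_of_nonneg hc.le]
  nlinarith

theorem rpow_bound_le_inner {g d : F} {p : ℕ} (hp : 2 ≤ p) {L β : ℝ} (hL : 0 < L) (hβ : 1 < β)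
    (hg : ‖g‖ ≤ L * ‖d‖ ^ p / p !) :
    ((p ! : ℝ) / ((p + 1) * L)) ^ ((1 : ℝ) / p)
        * ‖g - (β * L / p ! * ‖d‖ ^ (p - 1)) • d‖ ^ (((p : ℝ) + 1) / p)
        * ((β ^ 2 - 1) ^ (((p : ℝ) - 1) / (2 * p)) / β)
        * (p / ((p : ℝ) ^ 2 - 1) ^ (((p : ℝ) - 1) / (2 * p)))
      ≤ ⟪g - (β * L / p ! * ‖d‖ ^ (p - 1)) • d, -d⟫ := by
  rcases (norm_nonneg d).eq_or_lt with hd | hd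
  · have hd0 : d = 0 := norm_eq_zero.mp hd.symm
    have hg0 : g = 0 := by
      rw [hd0, norm_zero, zero_pow (by omega), mul_zero, zero_div] at hg
      exact norm_le_zero_iff.mp hg
    rw [hd0, hg0, smul_zero, sub_zero, norm_zero, Real.zero_rpow (by positivity)]
    simp
  set c := β * L / p ! * ‖d‖ ^ (p - 1)
  have hc : 0 < c := by positivity
  have hd_succ : ‖d‖ ^ (p + 1) = ‖d‖ ^ (p - 1) * ‖d‖ ^ 2 := by rw [← pow_add]; congr 1; omega
  have hd_pow : ‖d‖ ^ p = ‖d‖ ^ (p - 1) * ‖d‖ := by rw [← pow_succ]; congr 1; omega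
  calc _ ≤ p ! * ‖g - c • d‖ ^ 2 / (2 * β * L * ‖d‖ ^ (p - 1))
        + (β ^ 2 - 1) * L * ‖d‖ ^ (p + 1) / (2 * β * p !) :=
        rpow_bound_le_div_pow_add_mul_pow hp hL hβ (norm_nonneg _) hd
    _ = (‖g - c • d‖ ^ 2 + c ^ 2 * ‖d‖ ^ 2 - (L * ‖d‖ ^ p / p !) ^ 2) / (2 * c) := by
        set N := ‖g - c • d‖
        rw [hd_succ, hd_pow, show c = β * L / p ! * ‖d‖ ^ (p - 1) from rfl]
        field_simp
        ring
    _ ≤ _ := le_inner_sub_smul_neg hc hg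

end Inequalities

theorem rcts_step_decrease_general_general
    {E : Type*} [NormedAddCommGroup E] [InnerProductSpace ℝ E] [FiniteDimensional ℝ E]
    (p : ℕ) (hp : 2 ≤ p) (f h : E → ℝ) (domh U : Set E)
    (hU : IsOpen U) (hsub : domh ⊆ U)
    (hf : ContDiffOn ℝ (p : ℕ∞) f U)
    (hhconv : ConvexOn ℝ domh h)
    (Lp H β : ℝ) (hLp : 0 < Lp) (hβ : 1 < β) (hH : H = β * Lp)
    (hLip : ∀ z ∈ domh, ∀ w ∈ domh,
      ‖iteratedFDeriv ℝ p f z - iteratedFDeriv ℝ p f w‖ ≤ Lp * ‖z - w‖)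
    (x : E) (hx : x ∈ domh) (T : E) (hT : T ∈ domh)
    (FT : E)
    (hFTdef : FT = gradient f T - gradient (fun z => OmegaTaylor p f x z) T
        - (H / (Nat.factorial p : ℝ) * ‖T - x‖ ^ (p - 1)) • (T - x)) :
    ((Nat.factorial p : ℝ) / (((p : ℝ) + 1) * Lp)) ^ ((1 : ℝ) / p) * ‖FT‖ ^ (((p : ℝ) + 1) / p)
        * ((β ^ 2 - 1) ^ (((p : ℝ) - 1) / (2 * (p : ℝ))) / β)
        * ((p : ℝ) / ((p : ℝ) ^ 2 - 1) ^ (((p : ℝ) - 1) / (2 * (p : ℝ))))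
      ≤ ⟪FT, x - T⟫ := by
  have hcontDiff : ∀ z ∈ domh, ContDiffAt ℝ p f z := fun z hz =>
    hf.contDiffAt (hU.mem_nhds (hsub hz))
  have htaylor := norm_gradient_sub_gradient_omegaTaylor_le hhconv.1 (by omega) hcontDiff
    hLp.le hLip hx hT
  rw [hFTdef, hH, ← neg_sub T x]
  exact rpow_bound_le_inner hp hLp hβ htaylor

/-- Lemma 2.1 of the paper: for `H = βL_p` with `β > 1` and `T` a step of the
Regularized Composite Tensor Method from `x`, with
`F'(T) = ∇f(T) − ∇Ω_p(f,x;T) − (H/p!)‖T−x‖^{p−1}(T−x)`, one has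
`⟨F'(T), x − T⟩ ≥ (p!/((p+1)L_p))^{1/p} ‖F'(T)‖^{(p+1)/p} ((β²−1)^{(p−1)/(2p)}/β) (p/(p²−1)^{(p−1)/(2p)})`. -/
theorem rcts_step_decrease_general
    {E : Type*} [NormedAddCommGroup E] [InnerProductSpace ℝ E] [FiniteDimensional ℝ E]
    (p : ℕ) (hp : 2 ≤ p) (f h : E → ℝ) (domh U : Set E)
    (hdomcl : IsClosed domh) (hU : IsOpen U) (hUconv : Convex ℝ U) (hsub : domh ⊆ U)
    (hf : ContDiffOn ℝ (p : ℕ∞) f U) (hfconv : ConvexOn ℝ U f)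
    (hhconv : ConvexOn ℝ domh h) (hhlsc : LowerSemicontinuousOn h domh)
    (Lp H β : ℝ) (hLp : 0 < Lp) (hβ : 1 < β) (hH : H = β * Lp)
    (hLip : ∀ z ∈ domh, ∀ w ∈ domh,
      ‖iteratedFDeriv ℝ p f z - iteratedFDeriv ℝ p f w‖ ≤ Lp * ‖z - w‖)
    (x : E) (hx : x ∈ domh) (T : E) (hT : T ∈ domh)
    (hmin : ∀ y ∈ domh,
      OmegaTaylor p f x T + H / (Nat.factorial (p + 1) : ℝ) * ‖T - x‖ ^ (p + 1) + h T ≤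
        OmegaTaylor p f x y + H / (Nat.factorial (p + 1) : ℝ) * ‖y - x‖ ^ (p + 1) + h y)
    (FT : E)
    (hFTdef : FT = gradient f T - gradient (fun z => OmegaTaylor p f x z) T
        - (H / (Nat.factorial p : ℝ) * ‖T - x‖ ^ (p - 1)) • (T - x)) :
    ((Nat.factorial p : ℝ) / (((p : ℝ) + 1) * Lp)) ^ ((1 : ℝ) / p) * ‖FT‖ ^ (((p : ℝ) + 1) / p)
        * ((β ^ 2 - 1) ^ (((p : ℝ) - 1) / (2 * (p : ℝ))) / β)
        * ((p : ℝ) / ((p : ℝ) ^ 2 - 1) ^ (((p : ℝ) - 1) / (2 * (p : ℝ))))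
      ≤ ⟪FT, x - T⟫ :=
  rcts_step_decrease_general_general p hp f h domh U hU hsub hf hhconv Lp H β hLp hβ hH hLip x hx T
    hT FT hFTdef
end

section
/- [Global sublinear rate] Let H = pL_p, let x* be a global minimizer of F = f + h with F* = F(x*), and let the sequence (x_k) be generated by x_0 ∈ dom h, x_{k+1} a minimizer over E of y ↦ Ω_p(f,x_k;y) + (H/(p+1)!)‖y−x_k‖^{p+1} + h(y). Assume D := sup{‖x − x*‖ : x ∈ dom h, F(x) ≤ F(x_0)} is finite. Then for every k ≥ 2: F(x_k) − F* ≤ ((p+1)(2p)^p/p!)·L_p·D^{p+1}/(k−1)^p. -/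
open scoped RealInnerProductSpace

/-!
If `D^p f` is `L_p`-Lipschitz, then `|f y - Ω_p(f,x;y)| ≤ L_p ‖y - x‖^(p+1) / (p+1)!`; with
`H = p L_p` the minimality of `x_{k+1}` for the regularized model therefore gives
`F(x_{k+1}) ≤ F(y) + (L_p / p!) ‖y - x_k‖^(p+1)` for every `y ∈ dom h`. Taking `y = x_k` shows
that `F(x_k)` decreases, so every `x_k` lies within `D` of `x*`; taking
`y = x_k + α (x* - x_k)` and using convexity gives, for `δ_k = F(x_k) - F*` and
`C = L_p D^(p+1) / p!`, the recursion `δ_{k+1} ≤ (1 - α) δ_k + C α^(p+1)` for all `α ∈ [0,1]`.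
With `α = 2p / (k + 2p + 1)` an induction yields `δ_{k+1} ≤ (p+1) C (2p / (k + 2p))^p`.
-/

open Set Finset
open scoped Nat

lemma abs_le_of_abs_deriv_le_pow {ρ : ℝ → ℝ} (hρ : ∀ t ∈ Icc (0 : ℝ) 1, DifferentiableAt ℝ ρ t)
    (hρ0 : ρ 0 = 0) {c : ℝ} {n : ℕ} (hd : ∀ t ∈ Icc (0 : ℝ) 1, |deriv ρ t| ≤ c * t ^ n)
    {t : ℝ} (ht : t ∈ Icc (0 : ℝ) 1) : |ρ t| ≤ c * t ^ (n + 1) / (n + 1) := by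
  have hB : ∀ t : ℝ, HasDerivAt (fun t ↦ c * t ^ (n + 1) / (n + 1)) (c * t ^ n) t := fun t ↦ by
    refine (((hasDerivAt_pow (n + 1) t).const_mul c).div_const ((n : ℝ) + 1)).congr_deriv ?_
    rw [Nat.add_sub_cancel]
    push_cast
    field_simp
  simpa using image_norm_le_of_norm_deriv_right_le_deriv_boundary
    (fun t ht ↦ (hρ t ht).continuousAt.continuousWithinAt)
    (fun t ht ↦ (hρ t (Ico_subset_Icc_self ht)).hasDerivAt.hasDerivWithinAt)
    (by simp [hρ0]) hB (fun t ht ↦ hd t (Ico_subset_Icc_self ht)) ht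

lemma hasDerivAt_sum_range_mul_pow_div_factorial (c : ℕ → ℝ) (n : ℕ) (t : ℝ) :
    HasDerivAt (fun t ↦ ∑ k ∈ range (n + 1), c k * t ^ k / k !)
      (∑ k ∈ range n, c (k + 1) * t ^ k / k !) t := by
  induction n with
  | zero => simpa using hasDerivAt_const t (c 0)
  | succ n ih =>
    simp only [sum_range_succ _ (n + 1)]
    refine (ih.add (((hasDerivAt_pow (n + 1) t).const_mul (c (n + 1))).div_const
      ((n + 1)! : ℝ))).congr_deriv ?_
    rw [sum_range_succ, Nat.factorial_succ]
    push_cast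
    field_simp

/-- The exponent `m` makes the statement strong enough for induction on `q`. -/
lemma abs_sub_taylor_le_of_abs_iteratedDeriv_sub_le {s : Set ℝ} (hs : IsOpen s)
    (hIcc : Icc (0 : ℝ) 1 ⊆ s) {A : ℝ} {m : ℕ} :
    ∀ (q : ℕ) {g : ℝ → ℝ}, ContDiffOn ℝ q g s →
      (∀ t ∈ Icc (0 : ℝ) 1, |iteratedDeriv q g t - iteratedDeriv q g 0| ≤ A * t ^ m) →
      ∀ t ∈ Icc (0 : ℝ) 1,
        |g t - ∑ k ∈ range (q + 1), iteratedDeriv k g 0 * t ^ k / k !|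
          ≤ A * m ! * t ^ (q + m) / (q + m)!
  | 0, g, _, hA, t, ht => by
    have := hA t ht
    simp only [iteratedDeriv_zero, zero_add, sum_range_one, pow_zero, Nat.factorial_zero,
      Nat.cast_one, div_one, mul_one] at this ⊢
    rwa [mul_right_comm, mul_div_cancel_right₀ _ (by positivity)]
  | q + 1, g, hg, hA, t, ht => by
    have hgd : DifferentiableOn ℝ g s := hg.differentiableOn (by simp)
    have ih := abs_sub_taylor_le_of_abs_iteratedDeriv_sub_le hs hIcc q
      (hg.deriv_of_isOpen hs (by simp)) (by simpa only [← iteratedDeriv_succ'] using hA)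
    set ρ := fun t ↦ g t - ∑ k ∈ range (q + 2), iteratedDeriv k g 0 * t ^ k / (k ! : ℝ)
    have hρ : ∀ t ∈ Icc (0 : ℝ) 1, HasDerivAt ρ (deriv g t -
        ∑ k ∈ range (q + 1), iteratedDeriv k (deriv g) 0 * t ^ k / k !) t := fun t ht ↦
      ((hgd.differentiableAt (hs.mem_nhds (hIcc ht))).hasDerivAt.sub
        (hasDerivAt_sum_range_mul_pow_div_factorial (iteratedDeriv · g 0) (q + 1) t)).congr_deriv
        (by simp only [iteratedDeriv_succ'])
    have hρ0 : ρ 0 = 0 := by simp [ρ, sum_range_succ']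
    convert abs_le_of_abs_deriv_le_pow (fun t ht ↦ (hρ t ht).differentiableAt) hρ0
      (c := A * m ! / (q + m)!) (n := q + m) (fun t ht ↦ by
        rw [(hρ t ht).deriv]; exact (ih t ht).trans_eq (by ring)) ht using 1
    rw [show q + 1 + m = q + m + 1 by ring, Nat.factorial_succ]
    push_cast
    field_simp

lemma iteratedDeriv_comp_add_smul {E F : Type*} [NormedAddCommGroup E] [NormedSpace ℝ E]
    [NormedAddCommGroup F] [NormedSpace ℝ F] {f : E → F} {U : Set E} {n : ℕ∞}
    (hU : IsOpen U) (hf : ContDiffOn ℝ n f U) (z v : E) {k : ℕ} (hk : k ≤ n) {t : ℝ}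
    (ht : z + t • v ∈ U) :
    iteratedDeriv k (fun t : ℝ ↦ f (z + t • v)) t =
      iteratedFDeriv ℝ k f (z + t • v) (fun _ ↦ v) := by
  set L := ContinuousLinearMap.toSpanSingleton ℝ v
  set Uz : Set E := (z + ·) ⁻¹' U
  have hUz : IsOpen Uz := hU.preimage (continuous_const.add continuous_id)
  have hL : IsOpen (L ⁻¹' Uz) := hUz.preimage L.continuous
  have hfz : ContDiffOn ℝ n (fun y ↦ f (z + y)) Uz :=
    hf.comp (contDiff_const.add contDiff_id).contDiffOn fun _ hy ↦ hy
  have hcomp := L.iteratedFDerivWithin_comp_right hfz hUz.uniqueDiffOn hL.uniqueDiffOn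
    (x := t) ht (i := k) (by exact_mod_cast hk)
  rw [iteratedFDerivWithin_of_isOpen k hL ht, iteratedFDerivWithin_of_isOpen (x := L t) k hUz ht,
    iteratedFDeriv_comp_add_left] at hcomp
  rw [iteratedDeriv_eq_iteratedFDeriv]
  exact congr($hcomp fun _ ↦ 1).trans (by simp [L])

theorem abs_sub_omegaTaylor_le {E : Type*} [NormedAddCommGroup E] [InnerProductSpace ℝ E]
    {p : ℕ} {f : E → ℝ} {U S : Set E} (hU : IsOpen U) (hf : ContDiffOn ℝ (p : ℕ∞) f U)
    (hS : Convex ℝ S) (hSU : S ⊆ U) {Lp : ℝ}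
    (hLip : ∀ a ∈ S, ∀ b ∈ S, ‖iteratedFDeriv ℝ p f a - iteratedFDeriv ℝ p f b‖ ≤ Lp * ‖a - b‖)
    {z w : E} (hz : z ∈ S) (hw : w ∈ S) :
    |f w - OmegaTaylor p f z w| ≤ Lp * ‖w - z‖ ^ (p + 1) / (p + 1)! := by
  set v := w - z
  have hseg : ∀ t ∈ Icc (0 : ℝ) 1, z + t • v ∈ S := fun t ht ↦ hS.add_smul_sub_mem hz hw ht
  have hs : IsOpen {t : ℝ | z + t • v ∈ U} :=
    hU.preimage (continuous_const.add (continuous_id.smul continuous_const))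
  have hg : ContDiffOn ℝ p (fun t : ℝ ↦ f (z + t • v)) {t | z + t • v ∈ U} :=
    hf.comp (contDiff_const.add (contDiff_id.smul contDiff_const)).contDiffOn fun _ ht ↦ ht
  have hderiv : ∀ k ≤ p, ∀ t ∈ Icc (0 : ℝ) 1, iteratedDeriv k (fun t : ℝ ↦ f (z + t • v)) t =
      iteratedFDeriv ℝ k f (z + t • v) (fun _ ↦ v) := fun k hk t ht ↦
    iteratedDeriv_comp_add_smul hU hf z v (by exact_mod_cast hk) (hSU (hseg t ht))
  have h0 : (0 : ℝ) ∈ Icc (0 : ℝ) 1 := left_mem_Icc.2 zero_le_one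
  have hA : ∀ t ∈ Icc (0 : ℝ) 1, |iteratedDeriv p (fun t : ℝ ↦ f (z + t • v)) t -
      iteratedDeriv p (fun t : ℝ ↦ f (z + t • v)) 0| ≤ Lp * ‖v‖ ^ (p + 1) * t ^ 1 := by
    intro t ht
    rw [hderiv p le_rfl t ht, hderiv p le_rfl 0 h0, ← sub_apply, ← Real.norm_eq_abs]
    calc _ ≤ ‖iteratedFDeriv ℝ p f (z + t • v) - iteratedFDeriv ℝ p f (z + (0 : ℝ) • v)‖ *
          ∏ _i : Fin p, ‖v‖ := ContinuousMultilinearMap.le_opNorm _ _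
      _ ≤ Lp * ‖t • v‖ * ‖v‖ ^ p := by
        rw [prod_const, card_univ, Fintype.card_fin]
        gcongr
        simpa using hLip _ (hseg t ht) _ hz
      _ = Lp * ‖v‖ ^ (p + 1) * t ^ 1 := by
        rw [norm_smul, Real.norm_of_nonneg ht.1]
        ring
  have := abs_sub_taylor_le_of_abs_iteratedDeriv_sub_le hs (fun t ht ↦ hSU (hseg t ht)) p hg hA
    1 (right_mem_Icc.2 zero_le_one)
  convert this using 2
  · rw [OmegaTaylor, one_smul, add_sub_cancel]
    refine congrArg _ (sum_congr rfl fun k hk ↦ ?_)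
    rw [hderiv k (Nat.lt_succ_iff.1 (mem_range.1 hk)) 0 h0]
    simp [v, div_eq_inv_mul]
  · simp

lemma add_le_add_add_of_omegaTaylor_add_le {E : Type*} [NormedAddCommGroup E]
    [InnerProductSpace ℝ E] {p : ℕ} {f h : E → ℝ} {S : Set E} {Lp H : ℝ} (hLH : Lp ≤ H)
    (htaylor : ∀ a ∈ S, ∀ b ∈ S, |f b - OmegaTaylor p f a b| ≤ Lp * ‖b - a‖ ^ (p + 1) / (p + 1)!)
    {x x' y : E} (hx : x ∈ S) (hx' : x' ∈ S) (hy : y ∈ S)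
    (hmin : OmegaTaylor p f x x' + H / (p + 1)! * ‖x' - x‖ ^ (p + 1) + h x' ≤
      OmegaTaylor p f x y + H / (p + 1)! * ‖y - x‖ ^ (p + 1) + h y) :
    f x' + h x' ≤ f y + h y + (Lp + H) / (p + 1)! * ‖y - x‖ ^ (p + 1) := by
  have hx'_le := (abs_le.1 (htaylor x hx x' hx')).2
  have hy_ge := (abs_le.1 (htaylor x hx y hy)).1
  have hreg : Lp * ‖x' - x‖ ^ (p + 1) / (p + 1)! ≤ H / (p + 1)! * ‖x' - x‖ ^ (p + 1) := by
    rw [div_mul_eq_mul_div]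
    gcongr
  have hsplit : (Lp + H) / (p + 1)! * ‖y - x‖ ^ (p + 1) =
      Lp * ‖y - x‖ ^ (p + 1) / (p + 1)! + H / (p + 1)! * ‖y - x‖ ^ (p + 1) := by ring
  linarith

lemma sub_le_one_sub_mul_add_of_le_add_norm_sub_pow {E : Type*} [NormedAddCommGroup E]
    [NormedSpace ℝ E] {F : E → ℝ} {S : Set E} (hF : ConvexOn ℝ S F) {x x' xstar : E}
    (hx : x ∈ S) (hxstar : xstar ∈ S) {c D : ℝ} {n : ℕ} (hc : 0 ≤ c) (hD : ‖x - xstar‖ ≤ D)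
    (hdesc : ∀ y ∈ S, F x' ≤ F y + c * ‖y - x‖ ^ n) {α : ℝ} (hα : α ∈ Icc (0 : ℝ) 1) :
    F x' - F xstar ≤ (1 - α) * (F x - F xstar) + c * D ^ n * α ^ n := by
  have h1α : 0 ≤ 1 - α := sub_nonneg.2 hα.2
  have hconv := hF.2 hx hxstar h1α hα.1 (by ring)
  have hy := hdesc _ (hF.1 hx hxstar h1α hα.1 (by ring))
  have hdist : ‖((1 - α) • x + α • xstar) - x‖ ≤ α * D := by
    rw [show (1 - α) • x + α • xstar - x = α • (xstar - x) by module, norm_smul,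
      Real.norm_of_nonneg hα.1, norm_sub_rev]
    exact mul_le_mul_of_nonneg_left hD hα.1
  have hpow : c * ‖((1 - α) • x + α • xstar) - x‖ ^ n ≤ c * D ^ n * α ^ n := by
    rw [mul_assoc, ← mul_pow, mul_comm D]
    gcongr
  simp only [smul_eq_mul] at hconv
  linarith

lemma add_one_pow_mul_sub_le_pow_succ {s : ℝ} (hs : 0 ≤ s) (p : ℕ) :
    (s + 1) ^ p * (s - p) ≤ s ^ (p + 1) := by
  induction p with
  | zero => simp
  | succ p ih =>
    have hp : (0 : ℝ) ≤ p := p.cast_nonneg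
    calc (s + 1) ^ (p + 1) * (s - (p + 1 : ℕ)) = (s + 1) ^ p * ((s + 1) * (s - p - 1)) := by
          push_cast; ring
      _ ≤ (s + 1) ^ p * (s * (s - p)) :=
          mul_le_mul_of_nonneg_left (by nlinarith) (by positivity)
      _ = s * ((s + 1) ^ p * (s - p)) := by ring
      _ ≤ s * s ^ (p + 1) := by gcongr
      _ = s ^ (p + 1 + 1) := by ring

lemma one_sub_mul_add_pow_le {p : ℕ} (hp : 1 ≤ p) {s : ℝ} (hs : 2 * p ≤ s) :
    (1 - 2 * p / (s + 1)) * ((p + 1) * (2 * p / s) ^ p) + (2 * p / (s + 1)) ^ (p + 1)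
      ≤ (p + 1) * (2 * p / (s + 1)) ^ p := by
  have hp' : (1 : ℝ) ≤ p := by exact_mod_cast hp
  have hs0 : 0 < s := by linarith
  have hsp : 0 < s - p := by linarith
  have hpow := add_one_pow_mul_sub_le_pow_succ hs0.le p
  have key : (s + 1 - 2 * p) * (p + 1) * (s + 1) ^ p + 2 * p * s ^ p ≤
      (p + 1) * (s + 1) * s ^ p := by
    refine le_of_mul_le_mul_right ?_ hsp
    have h1 : 0 ≤ (s + 1 - 2 * p) * (p + 1) := by nlinarith
    have h2 : 0 ≤ s ^ p * (p * (p - 1) * (s + 1)) := by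
      have : 0 ≤ (p : ℝ) * (p - 1) := by nlinarith
      positivity
    calc _ = (s + 1 - 2 * p) * (p + 1) * ((s + 1) ^ p * (s - p)) + 2 * p * s ^ p * (s - p) := by
          ring
      _ ≤ (s + 1 - 2 * p) * (p + 1) * s ^ (p + 1) + 2 * p * s ^ p * (s - p) := by gcongr
      _ = (p + 1) * (s + 1) * s ^ p * (s - p) - s ^ p * (p * (p - 1) * (s + 1)) := by ring
      _ ≤ _ := by linarith
  have hs0' : s ≠ 0 := hs0.ne'
  have hs1 : s + 1 ≠ 0 := by positivity
  rw [div_pow, div_pow, div_pow]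
  have hc : 0 ≤ (2 * p) ^ p / (s ^ p * (s + 1) ^ (p + 1)) := by positivity
  calc _ = (2 * p) ^ p / (s ^ p * (s + 1) ^ (p + 1)) *
        ((s + 1 - 2 * p) * (p + 1) * (s + 1) ^ p + 2 * p * s ^ p) := by
        field_simp
        ring
    _ ≤ (2 * p) ^ p / (s ^ p * (s + 1) ^ (p + 1)) * ((p + 1) * (s + 1) * s ^ p) := by gcongr
    _ = _ := by
        field_simp
        ring

section Recursion

variable {δ : ℕ → ℝ} {C : ℝ} {p : ℕ}

lemma le_mul_div_add_pow_of_le_one_sub_mul_add (hC : 0 ≤ C) (hp : 1 ≤ p)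
    (hδ : ∀ k, ∀ α ∈ Icc (0 : ℝ) 1, δ (k + 1) ≤ (1 - α) * δ k + C * α ^ (p + 1)) (k : ℕ) :
    δ (k + 1) ≤ (p + 1) * C * (2 * p / (k + 2 * p)) ^ p := by
  induction k with
  | zero =>
    have h2p : (2 * p : ℝ) ≠ 0 := by positivity
    have := hδ 0 1 (right_mem_Icc.2 zero_le_one)
    simp only [sub_self, zero_mul, one_pow, mul_one, zero_add] at this
    simp only [Nat.cast_zero, zero_add, div_self h2p, one_pow, mul_one]
    nlinarith
  | succ k ih =>
    set s : ℝ := k + 2 * p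
    have hs : 2 * p ≤ s := le_add_of_nonneg_left k.cast_nonneg
    have hα : 2 * p / (s + 1) ∈ Icc (0 : ℝ) 1 :=
      ⟨by positivity, div_le_one_of_le₀ (by linarith) (by positivity)⟩
    calc δ (k + 1 + 1)
        ≤ (1 - 2 * p / (s + 1)) * δ (k + 1) + C * (2 * p / (s + 1)) ^ (p + 1) := hδ _ _ hα
      _ ≤ (1 - 2 * p / (s + 1)) * ((p + 1) * C * (2 * p / s) ^ p) +
          C * (2 * p / (s + 1)) ^ (p + 1) := by
        gcongr
        exact sub_nonneg.2 hα.2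
      _ = C * ((1 - 2 * p / (s + 1)) * ((p + 1) * (2 * p / s) ^ p) +
          (2 * p / (s + 1)) ^ (p + 1)) := by ring
      _ ≤ C * ((p + 1) * (2 * p / (s + 1)) ^ p) := by
        gcongr
        exact one_sub_mul_add_pow_le hp hs
      _ = (p + 1) * C * (2 * p / ((k + 1 : ℕ) + 2 * p)) ^ p := by
        push_cast
        ring

lemma le_mul_div_sub_one_pow_of_le_one_sub_mul_add (hC : 0 ≤ C) (hp : 1 ≤ p)
    (hδ : ∀ k, ∀ α ∈ Icc (0 : ℝ) 1, δ (k + 1) ≤ (1 - α) * δ k + C * α ^ (p + 1))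
    (k : ℕ) (hk : 2 ≤ k) :
    δ k ≤ (p + 1) * (2 * p) ^ p * C / (k - 1) ^ p := by
  obtain ⟨j, rfl⟩ : ∃ j, k = j + 1 := ⟨k - 1, by omega⟩
  have hj : (0 : ℝ) < j := by exact_mod_cast (by omega : 0 < j)
  calc δ (j + 1) ≤ (p + 1) * C * (2 * p / (j + 2 * p)) ^ p :=
        le_mul_div_add_pow_of_le_one_sub_mul_add hC hp hδ j
    _ ≤ (p + 1) * C * (2 * p / j) ^ p := by
        gcongr
        exact le_add_of_nonneg_right (by positivity)
    _ = _ := by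
        push_cast
        rw [add_sub_cancel_right, div_pow]
        ring

end Recursion

theorem rctm_global_sublinear_rate_general
    {E : Type*} [NormedAddCommGroup E] [InnerProductSpace ℝ E]
    (p : ℕ) (hp : 2 ≤ p) (f h F : E → ℝ) (domh U : Set E)
    (hU : IsOpen U) (hsub : domh ⊆ U)
    (hf : ContDiffOn ℝ (p : ℕ∞) f U) (hfconv : ConvexOn ℝ U f)
    (hhconv : ConvexOn ℝ domh h)
    (hF : ∀ z, F z = f z + h z)
    (Lp H : ℝ) (hLp : 0 < Lp) (hH : H = (p : ℝ) * Lp)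
    (hLip : ∀ z ∈ domh, ∀ w ∈ domh,
      ‖iteratedFDeriv ℝ p f z - iteratedFDeriv ℝ p f w‖ ≤ Lp * ‖z - w‖)
    (xstar : E) (hxstar : xstar ∈ domh)
    (Fstar : ℝ) (hFstar : Fstar = F xstar)
    (x : ℕ → E) (hx0 : x 0 ∈ domh)
    (hstep : ∀ k : ℕ, x (k + 1) ∈ domh ∧ ∀ y ∈ domh,
      OmegaTaylor p f (x k) (x (k + 1))
          + H / (Nat.factorial (p + 1) : ℝ) * ‖x (k + 1) - x k‖ ^ (p + 1) + h (x (k + 1)) ≤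
        OmegaTaylor p f (x k) y
          + H / (Nat.factorial (p + 1) : ℝ) * ‖y - x k‖ ^ (p + 1) + h y)
    (D : ℝ) (hD : ∀ z ∈ domh, F z ≤ F (x 0) → ‖z - xstar‖ ≤ D) :
    ∀ k : ℕ, 2 ≤ k →
      F (x k) - Fstar ≤
        ((p : ℝ) + 1) * (2 * (p : ℝ)) ^ p / (Nat.factorial p : ℝ)
          * (Lp * D ^ (p + 1) / ((k : ℝ) - 1) ^ p) := by
  have hS : Convex ℝ domh := hhconv.1
  have hxk : ∀ k, x k ∈ domh
    | 0 => hx0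
    | k + 1 => (hstep k).1
  have hcoef : (Lp + H) / (p + 1)! = Lp / p ! := by
    rw [hH, Nat.factorial_succ]
    push_cast
    field_simp
    ring
  have hdesc : ∀ k, ∀ y ∈ domh, F (x (k + 1)) ≤ F y + Lp / p ! * ‖y - x k‖ ^ (p + 1) :=
    fun k y hy ↦ by
      simpa only [hF, hcoef] using add_le_add_add_of_omegaTaylor_add_le
        (hH ▸ le_mul_of_one_le_left hLp.le (by exact_mod_cast (by omega : 1 ≤ p)))
        (fun a ha b hb ↦ abs_sub_omegaTaylor_le hU hf hS hsub hLip ha hb)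
        (hxk k) (hxk (k + 1)) hy ((hstep k).2 y hy)
  have hlevel : ∀ k, F (x k) ≤ F (x 0) := fun k ↦
    antitone_nat_of_succ_le (f := fun k ↦ F (x k))
      (fun k ↦ by simpa using hdesc k (x k) (hxk k)) k.zero_le
  have hFconv : ConvexOn ℝ domh F := by
    rw [show F = f + h from funext hF]
    exact (hfconv.subset hsub hS).add hhconv
  have hD0 : 0 ≤ D := (norm_nonneg _).trans (hD _ hx0 le_rfl)
  intro k hk
  calc F (x k) - Fstar ≤ (p + 1) * (2 * p) ^ p * (Lp / p ! * D ^ (p + 1)) / (k - 1) ^ p :=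
        le_mul_div_sub_one_pow_of_le_one_sub_mul_add (δ := fun k ↦ F (x k) - Fstar)
          (by positivity) (by omega) (fun k α hα ↦ hFstar ▸
            sub_le_one_sub_mul_add_of_le_add_norm_sub_pow hFconv (hxk k) hxstar (by positivity)
              (hD _ (hxk k) (hlevel k)) (hdesc k) hα) k hk
    _ = _ := by ring

/-- Theorem 4.1 of the paper: global sublinear rate of RCTM with `H = pL_p`.
If `D` bounds the radius of the initial level set, then for all `k ≥ 2`,
`F(x_k) − F* ≤ ((p+1)(2p)^p/p!) · L_p D^{p+1}/(k−1)^p`. -/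
theorem rctm_global_sublinear_rate
    {E : Type*} [NormedAddCommGroup E] [InnerProductSpace ℝ E] [FiniteDimensional ℝ E]
    (p : ℕ) (hp : 2 ≤ p) (f h F : E → ℝ) (domh U : Set E)
    (hdomcl : IsClosed domh) (hU : IsOpen U) (hUconv : Convex ℝ U) (hsub : domh ⊆ U)
    (hf : ContDiffOn ℝ (p : ℕ∞) f U) (hfconv : ConvexOn ℝ U f)
    (hhconv : ConvexOn ℝ domh h) (hhlsc : LowerSemicontinuousOn h domh)
    (hF : ∀ z, F z = f z + h z)
    (Lp H : ℝ) (hLp : 0 < Lp) (hH : H = (p : ℝ) * Lp)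
    (hLip : ∀ z ∈ domh, ∀ w ∈ domh,
      ‖iteratedFDeriv ℝ p f z - iteratedFDeriv ℝ p f w‖ ≤ Lp * ‖z - w‖)
    (xstar : E) (hxstar : xstar ∈ domh) (hminF : ∀ y ∈ domh, F xstar ≤ F y)
    (Fstar : ℝ) (hFstar : Fstar = F xstar)
    (x : ℕ → E) (hx0 : x 0 ∈ domh)
    (hstep : ∀ k : ℕ, x (k + 1) ∈ domh ∧ ∀ y ∈ domh,
      OmegaTaylor p f (x k) (x (k + 1))
          + H / (Nat.factorial (p + 1) : ℝ) * ‖x (k + 1) - x k‖ ^ (p + 1) + h (x (k + 1)) ≤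
        OmegaTaylor p f (x k) y
          + H / (Nat.factorial (p + 1) : ℝ) * ‖y - x k‖ ^ (p + 1) + h y)
    (D : ℝ) (hD : ∀ z ∈ domh, F z ≤ F (x 0) → ‖z - xstar‖ ≤ D) :
    ∀ k : ℕ, 2 ≤ k →
      F (x k) - Fstar ≤
        ((p : ℝ) + 1) * (2 * (p : ℝ)) ^ p / (Nat.factorial p : ℝ)
          * (Lp * D ^ (p + 1) / ((k : ℝ) - 1) ^ p) :=
  rctm_global_sublinear_rate_general p hp f h F domh U hU hsub hf hfconv hhconv hF Lp H hLp hH hLip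
    xstar hxstar Fstar hFstar x hx0 hstep D hD
end

section
/- [Key estimate for the inexact proximal method] Let a_i > 0 and δ_i ≥ 0 be given for i ≥ 1, let x_0 ∈ dom F, and for each i ≥ 1 let x_i ∈ dom F and g_i be a subgradient of Φ_i(x) := a_i F(x) + ½‖x − x_{i−1}‖² at x_i with ‖g_i‖ ≤ δ_i; set F'(x_i) := (g_i − (x_i − x_{i−1}))/a_i, a subgradient of F at x_i. Then for every k ≥ 0 and every x ∈ dom F: ½‖x_0 − x‖² + Σ_{i=1}^k a_i F(x) ≥ ½‖x_k − x‖² + Σ_{i=1}^k ( a_i F(x_i) + (a_i²/2)‖F'(x_i)‖² + ⟨g_i, x − x_{i−1}⟩ − δ_i²/2 ). -/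
open scoped RealInnerProductSpace

/-- `g` is a subgradient of `φ` at `z`, relative to the set `s`. -/
def IsSubgradOn {E : Type*} [NormedAddCommGroup E] [InnerProductSpace ℝ E]
    (s : Set E) (φ : E → ℝ) (g z : E) : Prop :=
  ∀ y ∈ s, φ z + ⟪g, y - z⟫ ≤ φ y

section Aux

variable {E : Type*} [NormedAddCommGroup E] [InnerProductSpace ℝ E]

/-- From the subgradient inequality for `Φ(y) = aF(y) + ½‖y-d‖²` at `u` plus convexity of `F`,
the vector `p = g - (u - d)` is a subgradient of `aF` at `u`. -/
lemma aux_subgrad (F : E → ℝ) (domF : Set E) (hFconv : ConvexOn ℝ domF F)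
    (u d gi : E) (ai : ℝ) (hai : 0 < ai) (hu : u ∈ domF)
    (hs : ∀ y ∈ domF, ai * F u + ‖u - d‖ ^ 2 / 2 + ⟪gi, y - u⟫ ≤ ai * F y + ‖y - d‖ ^ 2 / 2)
    (y : E) (hy : y ∈ domF) :
    ai * F u + ⟪gi - (u - d), y - u⟫ ≤ ai * F y := by
  refine le_of_forall_pos_le_add fun ε hε => ?_
  set N : ℝ := ‖y - u‖ ^ 2 with hN
  have hN0 : 0 ≤ N := by positivity
  set t : ℝ := min 1 (ε / (N / 2 + 1)) with ht
  have htpos : 0 < t := lt_min one_pos (by positivity)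
  have ht1 : t ≤ 1 := min_le_left _ _
  have htN : t * (N / 2) ≤ ε := by
    have h2 : t ≤ ε / (N / 2 + 1) := min_le_right _ _
    have h3 : t * (N / 2 + 1) ≤ ε := by
      rw [← le_div_iff₀ (by positivity)]; exact h2
    nlinarith
  have hmem : (1 - t) • u + t • y ∈ domF :=
    hFconv.1 hu hy (by linarith) htpos.le (by ring)
  have H := hs _ hmem
  have hFc : F ((1 - t) • u + t • y) ≤ (1 - t) * F u + t * F y := by
    simpa using hFconv.2 hu hy (by linarith : (0:ℝ) ≤ 1 - t) htpos.le (by ring)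
  have hvec : (1 - t) • u + t • y - u = t • (y - u) := by module
  have hvec2 : (1 - t) • u + t • y - d = (u - d) + t • (y - u) := by module
  have hinner : ⟪gi, (1 - t) • u + t • y - u⟫ = t * ⟪gi, y - u⟫ := by
    rw [hvec, real_inner_smul_right]
  have hnorm : ‖(1 - t) • u + t • y - d‖ ^ 2
      = ‖u - d‖ ^ 2 + 2 * (t * ⟪u - d, y - u⟫) + t ^ 2 * N := by
    rw [hvec2, norm_add_sq_real, real_inner_smul_right, norm_smul, mul_pow,
      Real.norm_eq_abs, abs_of_pos htpos, hN]
  have key : t * (ai * F u + ⟪gi, y - u⟫ - ⟪u - d, y - u⟫)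
      ≤ t * (ai * F y + t * (N / 2)) := by nlinarith [H, hFc]
  have key2 : ai * F u + ⟪gi, y - u⟫ - ⟪u - d, y - u⟫ ≤ ai * F y + t * (N / 2) :=
    le_of_mul_le_mul_left key htpos
  have : ⟪gi - (u - d), y - u⟫ = ⟪gi, y - u⟫ - ⟪u - d, y - u⟫ := inner_sub_left _ _ _
  linarith

/-- The quadratic identity underlying the one-step estimate. -/
lemma aux_identity (u d z p : E) :
    ‖u - z‖ ^ 2 / 2 + ‖p‖ ^ 2 / 2 + ⟪p + (u - d), z - d⟫ - ⟪p, z - u⟫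
      = ‖d - z‖ ^ 2 / 2 + ‖p + (u - d)‖ ^ 2 / 2 := by
  have h1 : ‖u - z‖ ^ 2 = ‖u‖ ^ 2 - 2 * ⟪u, z⟫ + ‖z‖ ^ 2 := norm_sub_sq_real u z
  have h2 : ‖d - z‖ ^ 2 = ‖d‖ ^ 2 - 2 * ⟪d, z⟫ + ‖z‖ ^ 2 := norm_sub_sq_real d z
  have h3 : ‖p + (u - d)‖ ^ 2 = ‖p‖ ^ 2 + 2 * ⟪p, u - d⟫ + ‖u - d‖ ^ 2 :=
    norm_add_sq_real p (u - d)
  have h4 : ‖u - d‖ ^ 2 = ‖u‖ ^ 2 - 2 * ⟪u, d⟫ + ‖d‖ ^ 2 := norm_sub_sq_real u d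
  simp only [inner_add_left, inner_sub_left, inner_sub_right] at *
  have c1 : ⟪u, z⟫ = ⟪z, u⟫ := real_inner_comm z u
  have c2 : ⟪d, z⟫ = ⟪z, d⟫ := real_inner_comm z d
  have c3 : ⟪u, d⟫ = ⟪d, u⟫ := real_inner_comm d u
  have c4 : ⟪d, d⟫ = ‖d‖ ^ 2 := real_inner_self_eq_norm_sq d
  linarith

end Aux

/-- key estimate for the inexact proximal method. If, for each `i ≥ 1`,
`g_i` is a subgradient at `x_i` of `Φ_i(x) = a_i F(x) + ½‖x − x_{i−1}‖²` with
`‖g_i‖ ≤ δ_i`, and `F'(x_i) = (g_i − (x_i − x_{i−1}))/a_i`, then for every `k ≥ 0` and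
every `x ∈ dom F`:
`½‖x_0 − x‖² + Σ_{i=1}^k a_i F(x) ≥ ½‖x_k − x‖² + Σ_{i=1}^k (a_i F(x_i) + (a_i²/2)‖F'(x_i)‖² + ⟨g_i, x − x_{i−1}⟩ − δ_i²/2)`. -/
theorem inexact_prox_key_estimate
    {E : Type*} [NormedAddCommGroup E] [InnerProductSpace ℝ E] [FiniteDimensional ℝ E]
    (F : E → ℝ) (domF : Set E) (hFconv : ConvexOn ℝ domF F)
    (hcl : IsClosed domF) (hlsc : LowerSemicontinuousOn F domF)
    (x g : ℕ → E) (a δ : ℕ → ℝ)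
    (hx : ∀ i, x i ∈ domF)
    (ha : ∀ i, 1 ≤ i → 0 < a i) (hδ : ∀ i, 1 ≤ i → 0 ≤ δ i)
    (hsub : ∀ i, 1 ≤ i → ∀ y ∈ domF,
      a i * F (x i) + ‖x i - x (i - 1)‖ ^ 2 / 2 + ⟪g i, y - x i⟫ ≤
        a i * F y + ‖y - x (i - 1)‖ ^ 2 / 2)
    (hg : ∀ i, 1 ≤ i → ‖g i‖ ≤ δ i)
    (Fp : ℕ → E) (hFp : ∀ i, 1 ≤ i → Fp i = (a i)⁻¹ • (g i - (x i - x (i - 1)))) :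
    ∀ k : ℕ, ∀ z ∈ domF,
      ‖x k - z‖ ^ 2 / 2 + ∑ i ∈ Finset.Icc 1 k,
          (a i * F (x i) + a i ^ 2 / 2 * ‖Fp i‖ ^ 2 + ⟪g i, z - x (i - 1)⟫ - δ i ^ 2 / 2) ≤
        ‖x 0 - z‖ ^ 2 / 2 + ∑ i ∈ Finset.Icc 1 k, a i * F z := by
  -- one-step estimate
  have step : ∀ i, 1 ≤ i → ∀ z ∈ domF,
      ‖x i - z‖ ^ 2 / 2 +
        (a i * F (x i) + a i ^ 2 / 2 * ‖Fp i‖ ^ 2 + ⟪g i, z - x (i - 1)⟫ - δ i ^ 2 / 2)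
      ≤ ‖x (i - 1) - z‖ ^ 2 / 2 + a i * F z := by
    intro i hi z hz
    have hai := ha i hi
    have hFpnorm : a i ^ 2 / 2 * ‖Fp i‖ ^ 2 = ‖g i - (x i - x (i - 1))‖ ^ 2 / 2 := by
      rw [hFp i hi, norm_smul, mul_pow]
      have : |(a i)⁻¹| = (a i)⁻¹ := abs_of_pos (by positivity)
      rw [Real.norm_eq_abs, this]
      field_simp
    set u := x i
    set d := x (i - 1)
    set p := g i - (u - d) with hp
    have hsubg : a i * F u + ⟪p, z - u⟫ ≤ a i * F z :=
      aux_subgrad F domF hFconv u d (g i) (a i) hai (hx i) (hsub i hi) z hz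
    have hgdec : g i = p + (u - d) := by rw [hp]; abel
    have hid := aux_identity u d z p
    rw [← hgdec] at hid
    have hgδ : ‖g i‖ ^ 2 ≤ δ i ^ 2 := by
      have := hg i hi
      nlinarith [norm_nonneg (g i)]
    linarith [hid, hsubg, hgδ, hFpnorm]
  intro k
  induction k with
  | zero => intro z _; simp
  | succ n ih =>
    intro z hz
    have hn1 : 1 ≤ n + 1 := Nat.le_add_left 1 n
    rw [Finset.sum_Icc_succ_top hn1, Finset.sum_Icc_succ_top hn1]
    have h1 := ih z hz
    have h2 := step (n + 1) hn1 z hz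
    simp only [Nat.add_sub_cancel] at h2 ⊢
    linarith
end

section
/- [Uniform bound on subgradient norms along the inexact proximal trajectory] In the setting of the inexact proximal method with the step-size rule a_{i+1} = (1/(2‖F'(x_i)‖))^{(p−1)/p}·(p!/((p+1)L_p))^{1/p} (where F'(x_i) ∈ ∂F(x_i) are the subgradients produced by the method, assumed nonzero, and p ≥ 2, L_p > 0), for every k ≥ 1: ‖F'(x_k)‖ ≤ max{ ((p+1)L_p·2^{p−1}/p!)·(‖x_0 − x*‖ + Σ_{i=1}^k δ_i)^p , ‖F'(x_0)‖ }. -/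
open scoped RealInnerProductSpace

/-!
The residual `hᵢ = gᵢ - (xᵢ - xᵢ₋₁) = aᵢ F'(xᵢ)` is a subgradient of `aᵢ F` at `xᵢ`, so
`⟪xᵢ - x*, hᵢ⟫ ≥ 0` by minimality of `x*`. As `(xᵢ - x*) + hᵢ = (xᵢ₋₁ - x*) + gᵢ`, both `‖xᵢ - x*‖`
and `aᵢ ‖F'(xᵢ)‖` are at most `‖xᵢ₋₁ - x*‖ + δᵢ`, hence at most `Rᵢ = ‖x₀ - x*‖ + ∑_{j ≤ i} δⱼ`.
If `M = ‖F'(xᵢ)‖` exceeds `‖F'(xᵢ₋₁)‖`, the step-size rule, being antitone in the norm, gives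
`aᵢ ≥ a(M)`, and `(a(M) M)ᵖ = M / C` with `C = (p+1) Lₚ 2ᵖ⁻¹ / p!`; so `M ≤ C Rᵢᵖ`. Induction on `i`,
with `R` nondecreasing, finishes the proof.
-/

open Filter Topology Finset

section ConvexAnalysis

variable {E : Type*} [NormedAddCommGroup E] [InnerProductSpace ℝ E]

/-- Along the segment from `z` towards `y` the quadratic term contributes only `O(t²)`, which
disappears after dividing by `t` and letting `t → 0⁺`. -/
theorem IsSubgradOn.sub_of_add_half_norm_sub_sq {s : Set E} {φ : E → ℝ} {c g z : E}
    (hφ : ConvexOn ℝ s φ) (hz : z ∈ s)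
    (h : IsSubgradOn s (fun y ↦ φ y + ‖y - c‖ ^ 2 / 2) g z) :
    IsSubgradOn s φ (g - (z - c)) z := by
  intro y hy
  have hlim : Tendsto (fun t : ℝ ↦ φ y - φ z + t / 2 * ‖y - z‖ ^ 2) (𝓝[>] 0)
      (𝓝 (φ y - φ z)) := by
    refine tendsto_nhdsWithin_of_tendsto_nhds ?_
    simpa using ((continuous_id.div_const 2).mul continuous_const).const_add
      (φ y - φ z) |>.tendsto 0
  suffices ∀ t ∈ Set.Ioc (0 : ℝ) 1, ⟪g - (z - c), y - z⟫ ≤ φ y - φ z + t / 2 * ‖y - z‖ ^ 2 by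
    linarith [ge_of_tendsto hlim (eventually_of_mem (Ioc_mem_nhdsGT one_pos) this)]
  rintro t ⟨ht0, ht1⟩
  have hseg : z + t • (y - z) = (1 - t) • z + t • y := by module
  have hconv : φ (z + t • (y - z)) ≤ (1 - t) * φ z + t * φ y := by
    rw [hseg]; exact hφ.2 hz hy (by linarith) ht0.le (by ring)
  have hsub := h _ (hseg ▸ hφ.1 hz hy (by linarith) ht0.le (by ring))
  have hsq : ‖z + t • (y - z) - c‖ ^ 2
      = ‖z - c‖ ^ 2 + 2 * (t * ⟪z - c, y - z⟫) + t ^ 2 * ‖y - z‖ ^ 2 := by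
    rw [show z + t • (y - z) - c = (z - c) + t • (y - z) by abel, norm_add_sq_real,
      real_inner_smul_right, norm_smul, Real.norm_eq_abs, mul_pow, sq_abs]
  simp only [add_sub_cancel_left, real_inner_smul_right, hsq] at hsub
  rw [inner_sub_left, ← mul_le_mul_iff_right₀ ht0]
  nlinarith

theorem IsSubgradOn.inner_sub_nonneg {s : Set E} {φ : E → ℝ} {g y z : E}
    (h : IsSubgradOn s φ g z) (hy : y ∈ s) (hyz : φ y ≤ φ z) : 0 ≤ ⟪g, z - y⟫ := by
  have := h y hy
  rw [← neg_sub, inner_neg_right] at this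
  linarith

theorem norm_le_norm_add_of_inner_nonneg {u v : E} (h : 0 ≤ ⟪u, v⟫) : ‖u‖ ≤ ‖u + v‖ := by
  refine le_of_sq_le_sq ?_ (norm_nonneg _)
  rw [norm_add_sq_real]
  nlinarith [sq_nonneg ‖v‖]

theorem IsSubgradOn.prox_norm_le {s : Set E} {φ : E → ℝ} {c g z xs : E}
    (hφ : ConvexOn ℝ s φ) (hz : z ∈ s) (hxs : xs ∈ s) (hmin : φ xs ≤ φ z)
    (h : IsSubgradOn s (fun y ↦ φ y + ‖y - c‖ ^ 2 / 2) g z) :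
    ‖z - xs‖ ≤ ‖c - xs‖ + ‖g‖ ∧ ‖g - (z - c)‖ ≤ ‖c - xs‖ + ‖g‖ := by
  have hinner := (h.sub_of_add_half_norm_sub_sq hφ hz).inner_sub_nonneg hxs hmin
  have hsplit : (z - xs) + (g - (z - c)) = c - xs + g := by abel
  have hsum := hsplit ▸ norm_add_le (c - xs) g
  exact ⟨(norm_le_norm_add_of_inner_nonneg (real_inner_comm (z - xs) _ ▸ hinner)).trans hsum,
    (add_comm (z - xs) _ ▸ norm_le_norm_add_of_inner_nonneg hinner).trans hsum⟩

end ConvexAnalysis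

theorem le_add_sum_Icc_of_le_add {u d : ℕ → ℝ} (h : ∀ n, u (n + 1) ≤ u n + d (n + 1)) (n : ℕ) :
    u n ≤ u 0 + ∑ i ∈ Icc 1 n, d i := by
  induction n with
  | zero => simp
  | succ n ih =>
    rw [sum_Icc_succ_top (Nat.le_add_left 1 n)]
    linarith [h n]

theorem le_max_of_le_max_succ {α : Type*} [LinearOrder α] {u B : ℕ → α} (hB : Monotone B)
    (h : ∀ n, u (n + 1) ≤ max (B (n + 1)) (u n)) (n : ℕ) : u n ≤ max (B n) (u 0) := by
  induction n with
  | zero => exact le_max_right _ _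
  | succ n ih =>
    exact (h n).trans (max_le (le_max_left _ _) (ih.trans (max_le_max_right _ (hB n.le_succ))))

noncomputable def proxStepSize (p : ℕ) (L N : ℝ) : ℝ :=
  (1 / (2 * N)) ^ (((p : ℝ) - 1) / p) * ((p.factorial : ℝ) / ((p + 1) * L)) ^ ((1 : ℝ) / p)

section StepSize

variable {p : ℕ} {L : ℝ}

theorem proxStepSize_pos {N : ℝ} (hL : 0 < L) (hN : 0 < N) : 0 < proxStepSize p L N := by
  unfold proxStepSize; positivity

theorem proxStepSize_le_of_le {M N : ℝ} (hp : p ≠ 0) (hL : 0 ≤ L) (hN : 0 < N) (hNM : N ≤ M) :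
    proxStepSize p L M ≤ proxStepSize p L N := by
  have he : 0 ≤ ((p : ℝ) - 1) / p := by
    have : (1 : ℝ) ≤ p := by exact_mod_cast Nat.one_le_iff_ne_zero.2 hp
    exact div_nonneg (by linarith) (by linarith)
  have hM : 0 < M := hN.trans_le hNM
  unfold proxStepSize
  gcongr

/-- The exponents are chosen so that `(a M)^p` is linear in `M`. -/
theorem proxStepSize_mul_pow {M : ℝ} (hp : p ≠ 0) (hL : 0 ≤ L) (hM : 0 < M) :
    (proxStepSize p L M * M) ^ p = M * p.factorial / ((p + 1) * L * 2 ^ (p - 1)) := by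
  have hexp : ((p : ℝ) - 1) / p * p = ((p - 1 : ℕ) : ℝ) := by
    rw [Nat.cast_sub (Nat.one_le_iff_ne_zero.2 hp)]
    field_simp
    simp
  unfold proxStepSize
  rw [mul_pow, mul_pow, ← Real.rpow_mul_natCast (by positivity), hexp, Real.rpow_natCast,
    one_div (p : ℝ), Real.rpow_inv_natCast_pow (by positivity) hp,
    ← Nat.sub_add_cancel (Nat.one_le_iff_ne_zero.2 hp), pow_succ M]
  simp only [Nat.add_sub_cancel, one_div, inv_pow, mul_pow]
  field_simp

theorem le_max_of_proxStepSize_mul_le {M N R : ℝ} (hp : p ≠ 0) (hL : 0 < L) (hN : 0 < N)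
    (hR : proxStepSize p L N * M ≤ R) :
    M ≤ max ((p + 1) * L * 2 ^ (p - 1) / p.factorial * R ^ p) N := by
  rcases le_or_gt M N with hMN | hNM
  · exact le_max_of_le_right hMN
  have hM : 0 < M := hN.trans hNM
  have hMR : proxStepSize p L M * M ≤ R :=
    (mul_le_mul_of_nonneg_right (proxStepSize_le_of_le hp hL.le hN hNM.le) hM.le).trans hR
  have hpow : M * p.factorial / ((p + 1) * L * 2 ^ (p - 1)) ≤ R ^ p := by
    rw [← proxStepSize_mul_pow hp hL.le hM]
    exact pow_le_pow_left₀ (mul_pos (proxStepSize_pos hL hM) hM).le hMR p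
  refine le_max_of_le_left ?_
  rw [div_le_iff₀ (by positivity)] at hpow
  rw [div_mul_eq_mul_div, le_div_iff₀ (by positivity)]
  linarith

end StepSize

theorem inexact_prox_subgradient_norm_bound_general
    {E : Type*} [NormedAddCommGroup E] [InnerProductSpace ℝ E]
    (p : ℕ) (hp : 2 ≤ p) (Lp : ℝ) (hLp : 0 < Lp)
    (F : E → ℝ) (domF : Set E) (hFconv : ConvexOn ℝ domF F)
    (xstar : E) (hxstar : xstar ∈ domF) (hmin : ∀ y ∈ domF, F xstar ≤ F y)
    (x g : ℕ → E) (a δ : ℕ → ℝ)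
    (hx : ∀ i, x i ∈ domF)
    (hsub : ∀ i, 1 ≤ i → ∀ y ∈ domF,
      a i * F (x i) + ‖x i - x (i - 1)‖ ^ 2 / 2 + ⟪g i, y - x i⟫ ≤
        a i * F y + ‖y - x (i - 1)‖ ^ 2 / 2)
    (hg : ∀ i, 1 ≤ i → ‖g i‖ ≤ δ i)
    (Fp : ℕ → E) (hFp : ∀ i, 1 ≤ i → Fp i = (a i)⁻¹ • (g i - (x i - x (i - 1))))
    (hFpne : ∀ i, Fp i ≠ 0)
    (harule : ∀ i : ℕ, a (i + 1) =
      (1 / (2 * ‖Fp i‖)) ^ (((p : ℝ) - 1) / p)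
        * ((Nat.factorial p : ℝ) / (((p : ℝ) + 1) * Lp)) ^ ((1 : ℝ) / p)) :
    ∀ k : ℕ, 1 ≤ k →
      ‖Fp k‖ ≤ max
        (((p : ℝ) + 1) * Lp * 2 ^ (p - 1) / (Nat.factorial p : ℝ)
          * (‖x 0 - xstar‖ + ∑ i ∈ Finset.Icc 1 k, δ i) ^ p)
        ‖Fp 0‖ := by
  intro k _
  set R : ℕ → ℝ := fun n ↦ ‖x 0 - xstar‖ + ∑ i ∈ Icc 1 n, δ i with hRdef
  have hrule (m : ℕ) : a (m + 1) = proxStepSize p Lp ‖Fp m‖ := harule m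
  have ha (m : ℕ) : 0 < a (m + 1) :=
    hrule m ▸ proxStepSize_pos hLp (norm_pos_iff.2 (hFpne m))
  have hgδ (m : ℕ) : ‖g (m + 1)‖ ≤ δ (m + 1) := hg (m + 1) (by omega)
  have hprox (m : ℕ) := IsSubgradOn.prox_norm_le (hFconv.smul (ha m).le) (hx (m + 1)) hxstar
    (mul_le_mul_of_nonneg_left (hmin _ (hx _)) (ha m).le)
    (by have h := hsub (m + 1) (by omega); simp only [Nat.add_sub_cancel] at h; exact h)
  have hRsucc (n : ℕ) : R (n + 1) = R n + δ (n + 1) := by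
    simp only [hRdef, sum_Icc_succ_top (Nat.le_add_left 1 n), add_assoc]
  have hxR : ∀ n, ‖x n - xstar‖ ≤ R n :=
    le_add_sum_Icc_of_le_add fun n ↦ (hprox n).1.trans (by linarith [hgδ n])
  have hRmono : Monotone R := monotone_nat_of_le_succ fun n ↦ by
    linarith [hRsucc n, (norm_nonneg _).trans (hgδ n)]
  have haR (m : ℕ) : a (m + 1) * ‖Fp (m + 1)‖ ≤ R (m + 1) := by
    rw [hFp (m + 1) (by omega), Nat.add_sub_cancel, norm_smul, norm_inv,
      Real.norm_of_nonneg (ha m).le, mul_inv_cancel_left₀ (ha m).ne', hRsucc]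
    linarith [(hprox m).2, hxR m, hgδ m]
  refine le_max_of_le_max_succ (u := fun n ↦ ‖Fp n‖)
    (B := fun n ↦ ((p : ℝ) + 1) * Lp * 2 ^ (p - 1) / p.factorial * R n ^ p) ?_ (fun m ↦ ?_) k
  · intro m n hmn
    have hRm : 0 ≤ R m := (norm_nonneg _).trans (hxR m)
    dsimp only
    gcongr
    exact hRmono hmn
  · exact le_max_of_proxStepSize_mul_le (by omega) hLp (norm_pos_iff.2 (hFpne m))
      (hrule m ▸ haR m)

/-- uniform bound on the subgradient norms along the trajectory of the
inexact proximal method with the step-size rule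
`a_{i+1} = (1/(2‖F'(x_i)‖))^{(p−1)/p} (p!/((p+1)L_p))^{1/p}`:
`‖F'(x_k)‖ ≤ max{((p+1)L_p 2^{p−1}/p!)(‖x_0 − x*‖ + Σ_{i=1}^k δ_i)^p, ‖F'(x_0)‖}`. -/
theorem inexact_prox_subgradient_norm_bound
    {E : Type*} [NormedAddCommGroup E] [InnerProductSpace ℝ E] [FiniteDimensional ℝ E]
    (p : ℕ) (hp : 2 ≤ p) (Lp : ℝ) (hLp : 0 < Lp)
    (F : E → ℝ) (domF : Set E) (hFconv : ConvexOn ℝ domF F)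
    (hcl : IsClosed domF) (hlsc : LowerSemicontinuousOn F domF)
    (xstar : E) (hxstar : xstar ∈ domF) (hmin : ∀ y ∈ domF, F xstar ≤ F y)
    (Fstar : ℝ) (hFstar : Fstar = F xstar)
    (x g : ℕ → E) (a δ : ℕ → ℝ)
    (hx : ∀ i, x i ∈ domF)
    (hδ : ∀ i, 1 ≤ i → 0 ≤ δ i)
    (hsub : ∀ i, 1 ≤ i → ∀ y ∈ domF,
      a i * F (x i) + ‖x i - x (i - 1)‖ ^ 2 / 2 + ⟪g i, y - x i⟫ ≤
        a i * F y + ‖y - x (i - 1)‖ ^ 2 / 2)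
    (hg : ∀ i, 1 ≤ i → ‖g i‖ ≤ δ i)
    (Fp : ℕ → E) (hFp : ∀ i, 1 ≤ i → Fp i = (a i)⁻¹ • (g i - (x i - x (i - 1))))
    (hFp0 : IsSubgradOn domF F (Fp 0) (x 0))
    (hFpne : ∀ i, Fp i ≠ 0)
    (harule : ∀ i : ℕ, a (i + 1) =
      (1 / (2 * ‖Fp i‖)) ^ (((p : ℝ) - 1) / p)
        * ((Nat.factorial p : ℝ) / (((p : ℝ) + 1) * Lp)) ^ ((1 : ℝ) / p)) :
    ∀ k : ℕ, 1 ≤ k →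
      ‖Fp k‖ ≤ max
        (((p : ℝ) + 1) * Lp * 2 ^ (p - 1) / (Nat.factorial p : ℝ)
          * (‖x 0 - xstar‖ + ∑ i ∈ Finset.Icc 1 k, δ i) ^ p)
        ‖Fp 0‖ :=
  inexact_prox_subgradient_norm_bound_general p hp Lp hLp F domF hFconv xstar hxstar hmin x g a δ hx
    hsub hg Fp hFp hFpne harule
end

section
/- [Rate of the outer proximal iterations] In the setting of the inexact proximal method with step-size rule a_{i+1} = (1/(2‖F'(x_i)‖))^{(p−1)/p}·(p!/((p+1)L_p))^{1/p}, suppose that for a given ε > 0 one has F(x_k) − F* ≥ ε for 1 ≤ k ≤ K. Then for every 1 ≤ k ≤ K, the averaged point x̄_k = (Σ_{i=1}^k a_i x_i)/(Σ_{i=1}^k a_i) satisfies F(x̄_k) − F* ≤ [L_p·(‖x_0 − x*‖ + Σ_{i=1}^k δ_i)^{p+1} / k^{(p+1)/2}]·[(p+1)·2^{p−2}·V_k(ε)/p!], where V_k(ε) = (‖F'(x_0)‖·(‖x_0 − x*‖ + Σ_{i=1}^k δ_i)/ε)^{(p−1)/k}. -/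
/-!
Along each inexact proximal step, `a_i F'(x_i) = g_i - (x_i - x_{i-1})` is a subgradient of
`a_i F`, so expanding `‖(x_{i-1} - x*) + g_i‖²` gives
`(a_i ‖F'(x_i)‖)² + 2 a_i (F(x_i) - F*) + ‖x_i - x*‖² ≤ (‖x_{i-1} - x*‖ + δ_i)²`.
Telescoping bounds both `Σ (a_i ‖F'(x_i)‖)²` and `2 Σ a_i (F(x_i) - F*)` by `R²`, where
`R = ‖x_0 - x*‖ + Σ δ_i`, and Jensen turns the second bound into `F(x̄_k) - F* ≤ R² / (2 Σ a_i)`.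
It remains to bound `Σ a_i` from below. The step-size rule reads
`a_{i+1}^p (2‖F'(x_i)‖)^{p-1} = p! / ((p+1) L_p)`; multiplying over `i < k`, the gradient norms
telescope to `‖F'(x_0)‖ / ‖F'(x_k)‖ ≤ ‖F'(x_0)‖ R / ε` and leave `∏ a_i` against
`∏ a_i ‖F'(x_i)‖ ≤ (R² / k)^{k/2}` (AM-GM). AM-GM once more passes from `∏ a_i` to `Σ a_i`.
-/

open scoped RealInnerProductSpace

open Finset Filter Topology
open scoped Nat

theorem card_pow_mul_prod_le_sum_pow {ι : Type*} (s : Finset ι) {z : ι → ℝ}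
    (hz : ∀ i ∈ s, 0 ≤ z i) : (#s : ℝ) ^ #s * ∏ i ∈ s, z i ≤ (∑ i ∈ s, z i) ^ #s := by
  rcases s.eq_empty_or_nonempty with rfl | hs
  · simp
  have hn : (0 : ℝ) < #s := by exact_mod_cast hs.card_pos
  have hgm := Real.geom_mean_le_arith_mean_weighted s (fun _ => 1 / (#s : ℝ)) z
    (fun _ _ => by positivity) (by simp [hn.ne']) hz
  rw [← mul_sum, Real.finsetProd_rpow s z hz] at hgm
  have hpow := pow_le_pow_left₀ (Real.rpow_nonneg (prod_nonneg hz) _) hgm #s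
  rw [← Real.rpow_natCast, ← Real.rpow_mul (prod_nonneg hz), one_div_mul_cancel hn.ne',
    Real.rpow_one, mul_pow, one_div, inv_pow] at hpow
  rwa [← le_inv_mul_iff₀ (by positivity)]

theorem le_add_sum_and_sum_add_sq_le {r e δ : ℕ → ℝ} (hr : ∀ i, 0 ≤ r i)
    (he : ∀ j, 0 ≤ e (j + 1)) (hδ : ∀ j, 0 ≤ δ (j + 1))
    (h : ∀ j, e (j + 1) + r (j + 1) ^ 2 ≤ (r j + δ (j + 1)) ^ 2) (k : ℕ) :
    r k ≤ r 0 + ∑ i ∈ Icc 1 k, δ i ∧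
      ∑ i ∈ Icc 1 k, e i + r k ^ 2 ≤ (r 0 + ∑ i ∈ Icc 1 k, δ i) ^ 2 := by
  induction k with
  | zero => simp
  | succ k ih =>
    obtain ⟨hrk, hsum⟩ := ih
    have hstep : r (k + 1) ≤ r k + δ (k + 1) :=
      (pow_le_pow_iff_left₀ (hr _) (add_nonneg (hr k) (hδ k)) two_ne_zero).mp
        (by linarith [he k, h k])
    rw [sum_Icc_succ_top (by omega), sum_Icc_succ_top (by omega)]
    constructor
    · linarith
    · nlinarith [h k, hr k, hδ k]

theorem prod_mul_pow_eq_of_pow_succ_mul_pow_eq {a γ : ℕ → ℝ} {C : ℝ} {q : ℕ}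
    (h : ∀ j, a (j + 1) ^ (q + 1) * γ j ^ q = C) (k : ℕ) :
    (∏ i ∈ Icc 1 k, a i) * (γ 0 * ∏ i ∈ Icc 1 k, a i * γ i) ^ q = C ^ k * γ k ^ q := by
  induction k with
  | zero => simp
  | succ k ih =>
    rw [prod_Icc_succ_top (by omega), prod_Icc_succ_top (by omega)]
    linear_combination (a (k + 1) ^ (q + 1) * γ (k + 1) ^ q) * ih + (C ^ k * γ (k + 1) ^ q) * h k

theorem pow_mul_pow_le_of_pow_succ_mul_pow_eq {a γ : ℕ → ℝ} {C R : ℝ} {q k : ℕ}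
    (ha : ∀ i ∈ Icc 1 k, 0 ≤ a i) (hγ : γ k ≠ 0) (h : ∀ j, a (j + 1) ^ (q + 1) * γ j ^ q = C)
    (hsum : ∑ i ∈ Icc 1 k, (a i * γ i) ^ 2 ≤ R ^ 2) :
    C ^ (2 * k) * (k : ℝ) ^ (k * (q + 2)) ≤
      (γ 0 / γ k) ^ (2 * q) * (R ^ q * ∑ i ∈ Icc 1 k, a i) ^ (2 * k) := by
  set PA := ∏ i ∈ Icc 1 k, a i
  set Pβ := ∏ i ∈ Icc 1 k, a i * γ i
  have hcard : #(Icc 1 k) = k := by simp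
  have hA : (k : ℝ) ^ k * PA ≤ (∑ i ∈ Icc 1 k, a i) ^ k := by
    simpa only [hcard] using card_pow_mul_prod_le_sum_pow _ ha
  have hB : (k : ℝ) ^ k * Pβ ^ 2 ≤ (R ^ 2) ^ k := by
    have := card_pow_mul_prod_le_sum_pow (Icc 1 k) (z := fun i => (a i * γ i) ^ 2)
      (fun _ _ => sq_nonneg _)
    rw [hcard, prod_pow] at this
    exact this.trans (pow_le_pow_left₀ (sum_nonneg fun _ _ => sq_nonneg _) hsum k)
  have hCk : C ^ k = PA * (γ 0 * Pβ) ^ q / γ k ^ q :=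
    eq_div_of_mul_eq (pow_ne_zero _ hγ) (prod_mul_pow_eq_of_pow_succ_mul_pow_eq h k).symm
  have hPA : 0 ≤ PA := prod_nonneg ha
  calc C ^ (2 * k) * (k : ℝ) ^ (k * (q + 2))
      = ((γ 0 / γ k) ^ q) ^ 2 * ((k ^ k * PA) ^ 2 * (k ^ k * Pβ ^ 2) ^ q) := by
        rw [pow_mul', hCk, div_pow, div_pow]; field_simp; ring
    _ ≤ ((γ 0 / γ k) ^ q) ^ 2 * (((∑ i ∈ Icc 1 k, a i) ^ k) ^ 2 * ((R ^ 2) ^ k) ^ q) := by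
        gcongr
    _ = (γ 0 / γ k) ^ (2 * q) * (R ^ q * ∑ i ∈ Icc 1 k, a i) ^ (2 * k) := by ring

theorem mul_rpow_le_mul_rpow_mul_sum {a γ : ℕ → ℝ} {C R : ℝ} {p k : ℕ} (hp : 1 ≤ p)
    (hk : 1 ≤ k) (hR : 0 ≤ R) (ha : ∀ i ∈ Icc 1 k, 0 ≤ a i) (hγ : ∀ i, 0 < γ i)
    (h : ∀ j, a (j + 1) ^ p * γ j ^ (p - 1) = C)
    (hsum : ∑ i ∈ Icc 1 k, (a i * γ i) ^ 2 ≤ R ^ 2) :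
    C * (k : ℝ) ^ (((p : ℝ) + 1) / 2) ≤
      R ^ (p - 1) * (γ 0 / γ k) ^ (((p : ℝ) - 1) / k) * ∑ i ∈ Icc 1 k, a i := by
  obtain ⟨q, rfl⟩ : ∃ q, p = q + 1 := ⟨p - 1, by omega⟩
  simp only [Nat.add_sub_cancel] at h ⊢
  have hk0 : (0 : ℝ) < k := by exact_mod_cast hk
  have hγ0k : 0 < γ 0 / γ k := div_pos (hγ 0) (hγ k)
  have hrpow : ∀ {x r : ℝ} {n m : ℕ}, 0 ≤ x → r * n = m → (x ^ r) ^ n = x ^ m :=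
    fun hx h => by rw [← Real.rpow_mul_natCast hx, h, Real.rpow_natCast]
  refine le_of_pow_le_pow_left₀ (n := 2 * k) (by omega) (mul_nonneg
    (mul_nonneg (pow_nonneg hR _) (Real.rpow_nonneg hγ0k.le _)) (sum_nonneg ha)) ?_
  rw [mul_pow, mul_pow, mul_pow, hrpow hk0.le (m := k * (q + 2)) (by push_cast; ring),
    hrpow hγ0k.le (m := 2 * q) (by push_cast; field_simp; ring)]
  exact (pow_mul_pow_le_of_pow_succ_mul_pow_eq ha (hγ k).ne' h hsum).trans_eq (by ring)

theorem pow_mul_pow_sub_one_eq_of_eq_rpow {p : ℕ} (hp : p ≠ 0) {a γ C : ℝ} (hγ : 0 < γ)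
    (hC : 0 ≤ C) (ha : a = (1 / γ) ^ (((p : ℝ) - 1) / p) * C ^ ((1 : ℝ) / p)) :
    a ^ p * γ ^ (p - 1) = C := by
  have hp' : (p : ℝ) ≠ 0 := Nat.cast_ne_zero.mpr hp
  rw [ha, mul_pow, ← Real.rpow_natCast, ← Real.rpow_mul (by positivity),
    ← Real.rpow_natCast (C ^ _), ← Real.rpow_mul hC, div_mul_cancel₀ _ hp',
    one_div_mul_cancel hp', Real.rpow_one, ← Nat.cast_pred (Nat.pos_of_ne_zero hp),
    Real.rpow_natCast, one_div, inv_pow]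
  field_simp

theorem sq_div_two_div_le_of_le_mul {p : ℕ} (hp : 2 ≤ p) {L R V A κ : ℝ} (hL : 0 < L)
    (hκ : 0 < κ) (hA : 0 < A)
    (h : (p ! : ℝ) / ((p + 1) * L) / 2 ^ (p - 1) * κ ≤ R ^ (p - 1) * V * A) :
    R ^ 2 / 2 / A ≤ L * R ^ (p + 1) / κ * ((p + 1) * 2 ^ (p - 2) * V / p !) := by
  have h2 : (2 : ℝ) ^ (p - 1) = 2 * 2 ^ (p - 2) := by rw [← pow_succ']; congr 1; omega
  have hRp : R ^ (p + 1) = R ^ 2 * R ^ (p - 1) := by rw [← pow_add]; congr 1; omega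
  rw [div_le_iff₀ hA]
  calc R ^ 2 / 2 = L * (p + 1) / p ! * (2 ^ (p - 2) * R ^ 2 / κ) *
        ((p ! : ℝ) / ((p + 1) * L) / 2 ^ (p - 1) * κ) := by
        rw [h2]; field_simp
    _ ≤ L * (p + 1) / p ! * (2 ^ (p - 2) * R ^ 2 / κ) * (R ^ (p - 1) * V * A) :=
        mul_le_mul_of_nonneg_left h (by positivity)
    _ = _ := by rw [hRp]; ring

theorem div_sum_le_of_stepsize_rule {p k : ℕ} (hp : 2 ≤ p) (hk : 1 ≤ k) {L ε R S : ℝ}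
    (hL : 0 < L) (hε : 0 < ε) {a γ : ℕ → ℝ} (hγ : ∀ i, 0 < γ i)
    (ha : ∀ i, a (i + 1) = (1 / (2 * γ i)) ^ (((p : ℝ) - 1) / p)
      * ((p ! : ℝ) / (((p : ℝ) + 1) * L)) ^ ((1 : ℝ) / p))
    (hB : ∑ i ∈ Icc 1 k, (a i * γ i) ^ 2 ≤ R ^ 2) (hS : S ≤ R ^ 2 / 2) (hεR : ε ≤ γ k * R) :
    S / ∑ i ∈ Icc 1 k, a i ≤ L * R ^ (p + 1) / (k : ℝ) ^ (((p : ℝ) + 1) / 2)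
      * (((p : ℝ) + 1) * 2 ^ (p - 2) * ((γ 0 * R / ε) ^ (((p : ℝ) - 1) / k)) / p !) := by
  have hapos : ∀ i ∈ Icc 1 k, 0 < a i := fun i hi => by
    obtain ⟨j, rfl⟩ := Nat.exists_eq_add_of_le' (mem_Icc.1 hi).1
    rw [ha]; have := hγ j; positivity
  have hR : 0 < R := pos_of_mul_pos_right (hεR.trans_lt' hε) (hγ k).le
  have hrule : ∀ j, a (j + 1) ^ p * γ j ^ (p - 1) = p ! / ((p + 1) * L) / 2 ^ (p - 1) :=
    fun j => by
      rw [eq_div_iff (by positivity), mul_assoc, ← mul_pow, mul_comm (γ j)]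
      exact pow_mul_pow_sub_one_eq_of_eq_rpow (by omega) (by linarith [hγ j]) (by positivity)
        (ha j)
  have hA := mul_rpow_le_mul_rpow_mul_sum (by omega) hk hR.le (fun i hi => (hapos i hi).le)
    hγ hrule hB
  have hV : γ 0 / γ k ≤ γ 0 * R / ε := by
    rw [div_le_div_iff₀ (hγ k) hε]
    nlinarith [hγ 0]
  have hApos : 0 < ∑ i ∈ Icc 1 k, a i := sum_pos hapos ⟨1, by simp [hk]⟩
  calc S / ∑ i ∈ Icc 1 k, a i ≤ R ^ 2 / 2 / ∑ i ∈ Icc 1 k, a i := by gcongr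
    _ ≤ _ := sq_div_two_div_le_of_le_mul hp hL (by positivity) hApos (hA.trans (by
        gcongr
        · exact (div_pos (hγ 0) (hγ k)).le
        · exact div_nonneg (sub_nonneg.2 (mod_cast (by omega : 1 ≤ p))) k.cast_nonneg))

section Subgradient

variable {E : Type*} [NormedAddCommGroup E] [InnerProductSpace ℝ E] {s : Set E} {F : E → ℝ}

theorem IsSubgradOn.of_le_add_mul_sq {v z : E} {c : ℝ} (hF : ConvexOn ℝ s F) (hz : z ∈ s)
    (h : ∀ y ∈ s, F z + ⟪v, y - z⟫ ≤ F y + c * ‖y - z‖ ^ 2) : IsSubgradOn s F v z := by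
  intro y hy
  have hsmall : ∀ t ∈ Set.Ioo (0 : ℝ) 1, F z + ⟪v, y - z⟫ ≤ F y + t * (c * ‖y - z‖ ^ 2) := by
    rintro t ⟨ht0, ht1⟩
    have hseg : z + t • (y - z) = (1 - t) • z + t • y := by
      rw [smul_sub, sub_smul, one_smul]; abel
    have hquad := h _ (hF.1.add_smul_sub_mem hz hy ⟨ht0.le, ht1.le⟩)
    have hconv := hF.2 hz hy (by linarith : 0 ≤ 1 - t) ht0.le (by ring)
    rw [← hseg, smul_eq_mul, smul_eq_mul] at hconv
    rw [add_sub_cancel_left, real_inner_smul_right, norm_smul, Real.norm_of_nonneg ht0.le,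
      mul_pow] at hquad
    refine le_of_mul_le_mul_left ?_ ht0
    linarith
  have hlim : Tendsto (fun t : ℝ => F y + t * (c * ‖y - z‖ ^ 2)) (𝓝[>] 0) (𝓝 (F y)) := by
    have : Continuous fun t : ℝ => F y + t * (c * ‖y - z‖ ^ 2) := by fun_prop
    simpa using (this.tendsto 0).mono_left nhdsWithin_le_nhds
  exact ge_of_tendsto hlim (eventually_of_mem (Ioo_mem_nhdsGT one_pos) hsmall)

theorem isSubgradOn_of_inexact_prox {a : ℝ} {g u z : E} (hF : ConvexOn ℝ s F) (ha : 0 < a)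
    (hz : z ∈ s)
    (h : ∀ y ∈ s, a * F z + ‖z - u‖ ^ 2 / 2 + ⟪g, y - z⟫ ≤ a * F y + ‖y - u‖ ^ 2 / 2) :
    IsSubgradOn s F (a⁻¹ • (g - (z - u))) z := by
  have hscaled : IsSubgradOn s (a • F) (g - (z - u)) z := by
    refine .of_le_add_mul_sq (c := 1 / 2) (hF.smul ha.le) hz fun y hy => ?_
    have hexp : ‖y - u‖ ^ 2 = ‖z - u‖ ^ 2 + 2 * ⟪z - u, y - z⟫ + ‖y - z‖ ^ 2 := by
      rw [← norm_add_sq_real, sub_add_sub_cancel']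
    simp only [Pi.smul_apply, smul_eq_mul, inner_sub_left g]
    linarith [h y hy]
  intro y hy
  refine le_of_mul_le_mul_left ?_ ha
  rw [real_inner_smul_left, mul_add, mul_inv_cancel_left₀ ha.ne']
  exact hscaled y hy

theorem IsSubgradOn.sub_le_inner {v w z : E} (hv : IsSubgradOn s F v z) (hw : w ∈ s) :
    F z - F w ≤ ⟪v, z - w⟫ := by
  have h := hv w hw
  rw [← neg_sub z w, inner_neg_right] at h
  linarith

theorem IsSubgradOn.inexact_prox_descent {a δ : ℝ} {g u v w z : E} (hv : IsSubgradOn s F v z)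
    (hw : w ∈ s) (ha : 0 ≤ a) (hg : ‖g‖ ≤ δ) (hav : a • v = g - (z - u)) :
    (a * ‖v‖) ^ 2 + 2 * (a * (F z - F w)) + ‖z - w‖ ^ 2 ≤ (‖u - w‖ + δ) ^ 2 := by
  have hgap : a * (F z - F w) ≤ ⟪a • v, z - w⟫ := by
    rw [real_inner_smul_left]
    exact mul_le_mul_of_nonneg_left (hv.sub_le_inner hw) ha
  have hnorm : ‖a • v + (z - w)‖ ≤ ‖u - w‖ + δ := by
    rw [hav, show g - (z - u) + (z - w) = g + (u - w) by abel, add_comm _ δ]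
    exact (norm_add_le _ _).trans (by gcongr)
  have hsq := pow_le_pow_left₀ (norm_nonneg _) hnorm 2
  rw [norm_add_sq_real, norm_smul, Real.norm_of_nonneg ha] at hsq
  linarith

theorem ConvexOn.map_weighted_mean_sub_le {ι : Type*} (hF : ConvexOn ℝ s F) (t : Finset ι)
    {w : ι → ℝ} {x : ι → E} (hw : ∀ i ∈ t, 0 ≤ w i) (hpos : 0 < ∑ i ∈ t, w i)
    (hx : ∀ i ∈ t, x i ∈ s) (c : ℝ) :
    F ((∑ i ∈ t, w i)⁻¹ • ∑ i ∈ t, w i • x i) - c ≤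
      (∑ i ∈ t, w i * (F (x i) - c)) / ∑ i ∈ t, w i := by
  have h := hF.map_centerMass_le hw hpos hx
  simp only [Finset.centerMass, smul_eq_mul, Function.comp_apply] at h
  simp only [mul_sub, sum_sub_distrib, ← sum_mul, sub_div, mul_div_cancel_left₀ _ hpos.ne']
  rw [div_eq_inv_mul]
  linarith

theorem inexact_prox_estimates {x g v : ℕ → E} {a δ : ℕ → ℝ} {w : E} (hw : w ∈ s)
    (hmin : ∀ y ∈ s, F w ≤ F y) (hx : ∀ i, x i ∈ s) (ha : ∀ i, 1 ≤ i → 0 ≤ a i)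
    (hg : ∀ i, 1 ≤ i → ‖g i‖ ≤ δ i) (hv : ∀ i, 1 ≤ i → IsSubgradOn s F (v i) (x i))
    (hav : ∀ i, 1 ≤ i → a i • v i = g i - (x i - x (i - 1))) (k : ℕ) :
    ‖x k - w‖ ≤ ‖x 0 - w‖ + ∑ i ∈ Icc 1 k, δ i ∧
      ∑ i ∈ Icc 1 k, (a i * ‖v i‖) ^ 2 ≤ (‖x 0 - w‖ + ∑ i ∈ Icc 1 k, δ i) ^ 2 ∧
      ∑ i ∈ Icc 1 k, a i * (F (x i) - F w) ≤ (‖x 0 - w‖ + ∑ i ∈ Icc 1 k, δ i) ^ 2 / 2 := by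
  have hgap : ∀ i, 1 ≤ i → 0 ≤ a i * (F (x i) - F w) := fun i hi =>
    mul_nonneg (ha i hi) (sub_nonneg.2 (hmin _ (hx i)))
  obtain ⟨hrk, hsum⟩ := le_add_sum_and_sum_add_sq_le (r := fun i => ‖x i - w‖)
    (e := fun i => (a i * ‖v i‖) ^ 2 + 2 * (a i * (F (x i) - F w))) (fun _ => norm_nonneg _)
    (fun j => add_nonneg (sq_nonneg _) (mul_nonneg zero_le_two (hgap _ (by omega))))
    (fun j => (norm_nonneg _).trans (hg _ (by omega)))
    (fun j => by
      have h := (hv _ (by omega)).inexact_prox_descent hw (ha _ (by omega)) (hg _ (by omega))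
        (hav (j + 1) (by omega))
      rwa [Nat.add_sub_cancel] at h)
    k
  simp only [sum_add_distrib, ← mul_sum] at hsum
  have hsq := sum_nonneg fun i (_ : i ∈ Icc 1 k) => sq_nonneg (a i * ‖v i‖)
  have hlin := sum_nonneg fun i (hi : i ∈ Icc 1 k) => hgap i (mem_Icc.1 hi).1
  exact ⟨hrk, by nlinarith, by nlinarith⟩

end Subgradient

theorem inexact_prox_outer_rate_general
    {E : Type*} [NormedAddCommGroup E] [InnerProductSpace ℝ E]
    (p : ℕ) (hp : 2 ≤ p) (Lp : ℝ) (hLp : 0 < Lp)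
    (F : E → ℝ) (domF : Set E) (hFconv : ConvexOn ℝ domF F)
    (xstar : E) (hxstar : xstar ∈ domF) (hmin : ∀ y ∈ domF, F xstar ≤ F y)
    (Fstar : ℝ) (hFstar : Fstar = F xstar)
    (x g : ℕ → E) (a δ : ℕ → ℝ)
    (hx : ∀ i, x i ∈ domF)
    (hsub : ∀ i, 1 ≤ i → ∀ y ∈ domF,
      a i * F (x i) + ‖x i - x (i - 1)‖ ^ 2 / 2 + ⟪g i, y - x i⟫ ≤
        a i * F y + ‖y - x (i - 1)‖ ^ 2 / 2)
    (hg : ∀ i, 1 ≤ i → ‖g i‖ ≤ δ i)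
    (Fp : ℕ → E) (hFp : ∀ i, 1 ≤ i → Fp i = (a i)⁻¹ • (g i - (x i - x (i - 1))))
    (hFpne : ∀ i, Fp i ≠ 0)
    (harule : ∀ i : ℕ, a (i + 1) =
      (1 / (2 * ‖Fp i‖)) ^ (((p : ℝ) - 1) / p)
        * ((Nat.factorial p : ℝ) / (((p : ℝ) + 1) * Lp)) ^ ((1 : ℝ) / p))
    (ε : ℝ) (hε : 0 < ε) (K : ℕ)
    (hlower : ∀ k : ℕ, 1 ≤ k → k ≤ K → ε ≤ F (x k) - Fstar) :
    ∀ k : ℕ, 1 ≤ k → k ≤ K →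
      F ((∑ i ∈ Finset.Icc 1 k, a i)⁻¹ • ∑ i ∈ Finset.Icc 1 k, a i • x i) - Fstar ≤
        Lp * (‖x 0 - xstar‖ + ∑ i ∈ Finset.Icc 1 k, δ i) ^ (p + 1)
            / (k : ℝ) ^ (((p : ℝ) + 1) / 2)
          * (((p : ℝ) + 1) * 2 ^ (p - 2)
            * ((‖Fp 0‖ * (‖x 0 - xstar‖ + ∑ i ∈ Finset.Icc 1 k, δ i) / ε)
                ^ (((p : ℝ) - 1) / k))
            / (Nat.factorial p : ℝ)) := by
  intro k hk1 hkK
  subst hFstar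
  have hγ : ∀ i, 0 < ‖Fp i‖ := fun i => norm_pos_iff.mpr (hFpne i)
  have hapos : ∀ i, 1 ≤ i → 0 < a i := fun i hi => by
    obtain ⟨j, rfl⟩ := Nat.exists_eq_add_of_le' hi
    rw [harule]; have := hγ j; positivity
  have hav : ∀ i, 1 ≤ i → a i • Fp i = g i - (x i - x (i - 1)) := fun i hi => by
    rw [hFp i hi, smul_inv_smul₀ (hapos i hi).ne']
  have hsubgrad : ∀ i, 1 ≤ i → IsSubgradOn domF F (Fp i) (x i) := fun i hi =>
    hFp i hi ▸ isSubgradOn_of_inexact_prox hFconv (hapos i hi) (hx i) (hsub i hi)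
  obtain ⟨hrk, hB, hS⟩ :=
    inexact_prox_estimates hxstar hmin hx (fun i hi => (hapos i hi).le) hg hsubgrad hav k
  have hεR : ε ≤ ‖Fp k‖ * (‖x 0 - xstar‖ + ∑ i ∈ Icc 1 k, δ i) := calc
    ε ≤ F (x k) - F xstar := hlower k hk1 hkK
    _ ≤ ⟪Fp k, x k - xstar⟫ := (hsubgrad k hk1).sub_le_inner hxstar
    _ ≤ ‖Fp k‖ * ‖x k - xstar‖ := real_inner_le_norm _ _
    _ ≤ _ := by gcongr
  have hweights : ∀ i ∈ Icc 1 k, 0 ≤ a i := fun i hi => (hapos i (mem_Icc.1 hi).1).le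
  have hApos : 0 < ∑ i ∈ Icc 1 k, a i :=
    sum_pos (fun i hi => hapos i (mem_Icc.1 hi).1) ⟨1, by simp [hk1]⟩
  calc _ ≤ (∑ i ∈ Icc 1 k, a i * (F (x i) - F xstar)) / ∑ i ∈ Icc 1 k, a i :=
        hFconv.map_weighted_mean_sub_le _ hweights hApos (fun i _ => hx i) _
    _ ≤ _ := div_sum_le_of_stepsize_rule hp hk1 hLp hε hγ harule hB hS hεR

/-- Lemma 6.2 of the paper: rate of the outer proximal iterations. With the
step-size rule `a_{i+1} = (1/(2‖F'(x_i)‖))^{(p−1)/p}(p!/((p+1)L_p))^{1/p}`, if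
`F(x_k) − F* ≥ ε` for `1 ≤ k ≤ K`, then the averaged point
`x̄_k = (Σ_{i=1}^k a_i x_i)/(Σ_{i=1}^k a_i)` satisfies
`F(x̄_k) − F* ≤ [L_p(‖x_0 − x*‖ + Σδ_i)^{p+1}/k^{(p+1)/2}]·[(p+1)2^{p−2}V_k(ε)/p!]`
with `V_k(ε) = (‖F'(x_0)‖(‖x_0 − x*‖ + Σδ_i)/ε)^{(p−1)/k}`. -/
theorem inexact_prox_outer_rate
    {E : Type*} [NormedAddCommGroup E] [InnerProductSpace ℝ E] [FiniteDimensional ℝ E]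
    (p : ℕ) (hp : 2 ≤ p) (Lp : ℝ) (hLp : 0 < Lp)
    (F : E → ℝ) (domF : Set E) (hFconv : ConvexOn ℝ domF F)
    (hcl : IsClosed domF) (hlsc : LowerSemicontinuousOn F domF)
    (xstar : E) (hxstar : xstar ∈ domF) (hmin : ∀ y ∈ domF, F xstar ≤ F y)
    (Fstar : ℝ) (hFstar : Fstar = F xstar)
    (x g : ℕ → E) (a δ : ℕ → ℝ)
    (hx : ∀ i, x i ∈ domF)
    (hδ : ∀ i, 1 ≤ i → 0 ≤ δ i)
    (hsub : ∀ i, 1 ≤ i → ∀ y ∈ domF,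
      a i * F (x i) + ‖x i - x (i - 1)‖ ^ 2 / 2 + ⟪g i, y - x i⟫ ≤
        a i * F y + ‖y - x (i - 1)‖ ^ 2 / 2)
    (hg : ∀ i, 1 ≤ i → ‖g i‖ ≤ δ i)
    (Fp : ℕ → E) (hFp : ∀ i, 1 ≤ i → Fp i = (a i)⁻¹ • (g i - (x i - x (i - 1))))
    (hFp0 : IsSubgradOn domF F (Fp 0) (x 0))
    (hFpne : ∀ i, Fp i ≠ 0)
    (harule : ∀ i : ℕ, a (i + 1) =
      (1 / (2 * ‖Fp i‖)) ^ (((p : ℝ) - 1) / p)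
        * ((Nat.factorial p : ℝ) / (((p : ℝ) + 1) * Lp)) ^ ((1 : ℝ) / p))
    (ε : ℝ) (hε : 0 < ε) (K : ℕ)
    (hlower : ∀ k : ℕ, 1 ≤ k → k ≤ K → ε ≤ F (x k) - Fstar) :
    ∀ k : ℕ, 1 ≤ k → k ≤ K →
      F ((∑ i ∈ Finset.Icc 1 k, a i)⁻¹ • ∑ i ∈ Finset.Icc 1 k, a i • x i) - Fstar ≤
        Lp * (‖x 0 - xstar‖ + ∑ i ∈ Finset.Icc 1 k, δ i) ^ (p + 1)
            / (k : ℝ) ^ (((p : ℝ) + 1) / 2)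
          * (((p : ℝ) + 1) * 2 ^ (p - 2)
            * ((‖Fp 0‖ * (‖x 0 - xstar‖ + ∑ i ∈ Finset.Icc 1 k, δ i) / ε)
                ^ (((p : ℝ) - 1) / k))
            / (Nat.factorial p : ℝ)) :=
  inexact_prox_outer_rate_general p hp Lp hLp F domF hFconv xstar hxstar hmin Fstar hFstar x g a δ
    hx hsub hg Fp hFp hFpne harule ε hε K hlower
end

section
/- [Final complexity of the inexact proximal scheme] In the setting of the inexact proximal method with step-size rule a_{i+1} = (1/(2‖F'(x_i)‖))^{(p−1)/p}·(p!/((p+1)L_p))^{1/p} and accuracies δ_k = c/k^s for fixed constants c > 0 and s > 1, suppose F(x_k) − F* ≥ ε for 1 ≤ k ≤ K, where ε > 0. Set R = ‖x_0 − x*‖ + cs/(s−1). Then for every k with ln(‖F'(x_0)‖·R/ε) ≤ k ≤ K, the averaged point x̄_k = (Σ_{i=1}^k a_i x_i)/(Σ_{i=1}^k a_i) satisfies F(x̄_k) − F* ≤ (L_p·R^{p+1}/k^{(p+1)/2})·((p+1)·2^{p−2}·e^{p−1}/p!). -/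
open scoped RealInnerProductSpace

/-!
Each inexact prox step makes `F'(x_i)` a genuine subgradient, with
`a_i F'(x_i) = g_i - (x_i - x_{i-1})`. Expanding `‖x_{i-1} - x* + g_i‖²` then gives the
Fejér-type estimate `∑ a_i² ‖F'(x_i)‖² + 2 ∑ a_i (F(x_i) - F*) + ‖x_k - x*‖² ≤ R²`, and by Jensen
the gap at the averaged point is at most `R² / (2 ∑ a_i)`.

For the step sizes, take logarithms in the step-size rule: since `a_i ‖F'(x_i)‖` is known and
`∑ log ‖F'(x_{i-1})‖` telescopes against `∑ log ‖F'(x_i)‖`, the sum `∑ log a_i` is expressed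
through `∑ log (a_i ‖F'(x_i)‖)` and `log (‖F'(x_0)‖ / ‖F'(x_k)‖)`. AM–GM and
`∑ a_i² ‖F'(x_i)‖² ≤ R²` bound the first by `k log (R / √k)`, and the gap lower bound
`ε ≤ ‖F'(x_k)‖ R` bounds the second by `k`; a second AM–GM turns the result into
`∑ a_i ≥ C_p k^{(p+1)/2} / ((2e)^{p-1} R^{p-1})` with `C_p = p! / ((p+1) L_p)`.
-/

open Finset Real

theorem sum_Icc_one_eq_sum_range {M : Type*} [AddCommMonoid M] (f : ℕ → M) (k : ℕ) :
    ∑ i ∈ Icc 1 k, f i = ∑ j ∈ range k, f (j + 1) := by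
  rw [← Ico_add_one_right_eq_Icc, sum_Ico_eq_sum_range, Nat.add_sub_cancel]
  simp only [add_comm]

theorem sum_log_le_card_mul_log_sum_div_card {ι : Type*} {t : Finset ι} (ht : t.Nonempty)
    {f : ι → ℝ} (hf : ∀ i ∈ t, 0 < f i) :
    ∑ i ∈ t, log (f i) ≤ #t * log ((∑ i ∈ t, f i) / #t) := by
  have hcard : (0 : ℝ) < #t := by exact_mod_cast ht.card_pos
  have h := strictConcaveOn_log_Ioi.concaveOn.le_map_sum (t := t) (w := fun _ => (#t : ℝ)⁻¹)
    (p := f) (fun _ _ => by positivity) (by simp [hcard.ne']) hf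
  simp only [smul_eq_mul, ← mul_sum] at h
  rw [inv_mul_eq_div, inv_mul_eq_div] at h
  rwa [div_le_iff₀' hcard] at h

/-- Bernoulli's inequality `(1 + 1/x)^s ≥ 1 + s/x`, rearranged as a telescoping bound. -/
theorem one_div_add_one_rpow_le {s : ℝ} (hs : 1 < s) {x : ℝ} (hx : 0 < x) :
    1 / (x + 1) ^ s ≤ (x ^ (1 - s) - (x + 1) ^ (1 - s)) / (s - 1) := by
  have hx1 : 0 < x + 1 := by linarith
  have hbern : x ^ s * (x + s) ≤ x * (x + 1) ^ s := by
    have h := one_add_mul_self_le_rpow_one_add (s := 1 / x)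
      (by linarith [one_div_pos.mpr hx] : (-1 : ℝ) ≤ 1 / x) hs.le
    have hsplit : (x + 1) ^ s = x ^ s * (1 + 1 / x) ^ s := by
      rw [← mul_rpow hx.le (by positivity)]
      congr 1
      field_simp
    rw [hsplit]
    have := mul_le_mul_of_nonneg_left h (by positivity : 0 ≤ x ^ s * x)
    calc x ^ s * (x + s) = x ^ s * x * (1 + s * (1 / x)) := by field_simp
      _ ≤ _ := this
      _ = _ := by ring
  rw [rpow_sub hx, rpow_sub hx1, rpow_one, rpow_one, le_div_iff₀ (by linarith),
    div_sub_div _ _ (rpow_pos_of_pos hx s).ne' (rpow_pos_of_pos hx1 s).ne',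
    one_div_mul_eq_div, ← div_div, div_le_div_iff_of_pos_right (rpow_pos_of_pos hx1 s),
    le_div_iff₀ (rpow_pos_of_pos hx s)]
  linear_combination hbern

theorem sum_range_div_natCast_add_one_rpow_le {c s : ℝ} (hc : 0 ≤ c) (hs : 1 < s) (k : ℕ) :
    ∑ j ∈ range k, c / ((j + 1 : ℕ) : ℝ) ^ s ≤ c * s / (s - 1) := by
  have hs1 : 0 < s - 1 := by linarith
  set b : ℕ → ℝ := fun m => c * ((m + 1 : ℕ) : ℝ) ^ (1 - s) / (s - 1)
  have hterm : ∀ j, c / ((j + 1 + 1 : ℕ) : ℝ) ^ s ≤ b j - b (j + 1) := fun j => by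
    have h := mul_le_mul_of_nonneg_left
      (one_div_add_one_rpow_le hs (x := ((j + 1 : ℕ) : ℝ)) (by positivity)) hc
    simp only [b]
    push_cast at h ⊢
    rw [← mul_one_div]
    exact h.trans_eq (by ring)
  cases k with
  | zero => simp; positivity
  | succ n =>
    have htail : 0 ≤ b n := by positivity
    have hb0 : b 0 = c / (s - 1) := by simp [b]
    calc ∑ j ∈ range (n + 1), c / ((j + 1 : ℕ) : ℝ) ^ s
        = ∑ j ∈ range n, c / ((j + 1 + 1 : ℕ) : ℝ) ^ s + c := by
          rw [sum_range_succ']; norm_num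
      _ ≤ b 0 - b n + c := by
          gcongr
          rw [← sum_range_sub' b n]
          exact sum_le_sum fun j _ => hterm j
      _ ≤ c * s / (s - 1) := by
          rw [hb0, show c * s / (s - 1) = c / (s - 1) + c by field_simp; ring]
          linarith

section InnerProductSpace

variable {E : Type*} [NormedAddCommGroup E] [InnerProductSpace ℝ E]

/-- Test the inequality at `z + t • (y - z)` and let `t → 0`. -/
theorem IsSubgradOn.of_le_add_norm_sq {s : Set E} {φ : E → ℝ} (hφ : ConvexOn ℝ s φ) {g z : E}
    (hz : z ∈ s) (h : ∀ y ∈ s, φ z + ⟪g, y - z⟫ ≤ φ y + ‖y - z‖ ^ 2 / 2) :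
    IsSubgradOn s φ g z := by
  intro y hy
  refine le_of_forall_pos_le_add fun η hη => ?_
  set c : ℝ := ‖y - z‖ ^ 2 / 2 with hc_def
  have hc : 0 ≤ c := by positivity
  set t : ℝ := min 1 (η / (c + 1))
  have ht0 : 0 < t := lt_min one_pos (by positivity)
  have ht1 : t ≤ 1 := min_le_left _ _
  have htc : t * c ≤ η := by
    calc t * c ≤ η / (c + 1) * (c + 1) := by gcongr; exacts [min_le_right _ _, by linarith]
      _ = η := by field_simp
  have hmem := hφ.1 hz hy (sub_nonneg.2 ht1) ht0.le (sub_add_cancel 1 t)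
  have hconv := hφ.2 hz hy (sub_nonneg.2 ht1) ht0.le (sub_add_cancel 1 t)
  have htest := h _ hmem
  have hdiff : (1 - t) • z + t • y - z = t • (y - z) := by module
  rw [hdiff, real_inner_smul_right, norm_smul, Real.norm_eq_abs, abs_of_pos ht0, mul_pow] at htest
  simp only [smul_eq_mul] at hconv
  have key : t * ⟪g, y - z⟫ ≤ t * (φ y - φ z + t * c) := by rw [hc_def]; linarith
  linarith [le_of_mul_le_mul_left key ht0]

theorem isSubgradOn_of_inexact_prox_s18 {s : Set E} {φ : E → ℝ} (hφ : ConvexOn ℝ s φ) {x g z : E}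
    (hz : z ∈ s) (h : ∀ y ∈ s, φ z + ‖z - x‖ ^ 2 / 2 + ⟪g, y - z⟫ ≤ φ y + ‖y - x‖ ^ 2 / 2) :
    IsSubgradOn s φ (g - (z - x)) z := by
  refine IsSubgradOn.of_le_add_norm_sq hφ hz fun y hy => ?_
  have hsplit : ‖y - x‖ ^ 2 = ‖y - z‖ ^ 2 + 2 * ⟪y - z, z - x⟫ + ‖z - x‖ ^ 2 := by
    rw [← norm_add_sq_real, sub_add_sub_cancel]
  rw [inner_sub_left, real_inner_comm (y - z) (z - x)]
  linarith [h y hy]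

theorem isSubgradOn_of_inexact_prox_step {s : Set E} {F : E → ℝ} (hF : ConvexOn ℝ s F) {a : ℝ}
    (ha : 0 < a) {x g z v : E} (hz : z ∈ s) (hv : a • v = g - (z - x))
    (h : ∀ y ∈ s, a * F z + ‖z - x‖ ^ 2 / 2 + ⟪g, y - z⟫ ≤ a * F y + ‖y - x‖ ^ 2 / 2) :
    IsSubgradOn s F v z := fun y hy => by
  have := isSubgradOn_of_inexact_prox_s18 (hF.smul ha.le) hz h y hy
  rw [← hv, real_inner_smul_left] at this
  simp only [smul_eq_mul] at this
  nlinarith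

theorem IsSubgradOn.sub_le_inner_s18 {s : Set E} {φ : E → ℝ} {g z y : E} (h : IsSubgradOn s φ g z)
    (hy : y ∈ s) : φ z - φ y ≤ ⟪g, z - y⟫ := by
  have := h y hy
  rw [← neg_sub, inner_neg_right] at this
  linarith

/-- `r j` stands for `x_j - x*`, `u j` for `a_{j+1} F'(x_{j+1})` and `g j` for the error
`g_{j+1}` of the prox step, so that `hstep` is the definition of `F'(x_{j+1})`. -/
theorem sum_norm_sq_add_two_inner_add_norm_sq_le {r u g : ℕ → E} {δ : ℕ → ℝ}
    (hstep : ∀ j, r (j + 1) + u j = r j + g j) (hg : ∀ j, ‖g j‖ ≤ δ j)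
    (hinner : ∀ j, 0 ≤ ⟪u j, r (j + 1)⟫) (m : ℕ) :
    ∑ j ∈ range m, (‖u j‖ ^ 2 + 2 * ⟪u j, r (j + 1)⟫) + ‖r m‖ ^ 2 ≤
      (‖r 0‖ + ∑ j ∈ range m, δ j) ^ 2 := by
  induction m with
  | zero => simp
  | succ m ih =>
    set B := ‖r 0‖ + ∑ j ∈ range m, δ j
    have hsum : 0 ≤ ∑ j ∈ range m, (‖u j‖ ^ 2 + 2 * ⟪u j, r (j + 1)⟫) :=
      sum_nonneg fun j _ => by nlinarith [hinner j]
    have hB : 0 ≤ B :=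
      add_nonneg (norm_nonneg _) (sum_nonneg fun j _ => (norm_nonneg _).trans (hg j))
    have hrm : ‖r m‖ ≤ B := by nlinarith [norm_nonneg (r m)]
    have hone : ‖u m‖ ^ 2 + 2 * ⟪u m, r (m + 1)⟫ + ‖r (m + 1)‖ ^ 2 ≤ (‖r m‖ + δ m) ^ 2 := by
      calc _ = ‖r (m + 1) + u m‖ ^ 2 := by rw [norm_add_sq_real, real_inner_comm]; ring
        _ = ‖r m + g m‖ ^ 2 := by rw [hstep]
        _ ≤ (‖r m‖ + δ m) ^ 2 := by
          gcongr
          exact (norm_add_le _ _).trans (by linarith [hg m])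
    have hδ : 0 ≤ δ m := (norm_nonneg _).trans (hg m)
    rw [sum_range_succ, sum_range_succ]
    nlinarith [mul_le_mul_of_nonneg_left hrm hδ]

theorem inexact_prox_estimates_s18 {x g v : ℕ → E} {xstar : E} {a δ : ℕ → ℝ}
    (ha : ∀ j, 0 < a (j + 1)) (hv : ∀ j, a (j + 1) • v (j + 1) = g (j + 1) - (x (j + 1) - x j))
    (hg : ∀ j, ‖g (j + 1)‖ ≤ δ (j + 1)) (hinner : ∀ j, 0 ≤ ⟪v (j + 1), x (j + 1) - xstar⟫)
    {m : ℕ} {B : ℝ} (hB : ‖x 0 - xstar‖ + ∑ j ∈ range m, δ (j + 1) ≤ B) :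
    ∑ j ∈ range m, (a (j + 1) * ‖v (j + 1)‖) ^ 2 ≤ B ^ 2 ∧
      ∑ j ∈ range m, a (j + 1) * ⟪v (j + 1), x (j + 1) - xstar⟫ ≤ B ^ 2 / 2 ∧
      ‖x m - xstar‖ ≤ B := by
  have hN : ∀ j, 0 ≤ a (j + 1) * ⟪v (j + 1), x (j + 1) - xstar⟫ :=
    fun j => mul_nonneg (ha j).le (hinner j)
  have h0 : 0 ≤ ‖x 0 - xstar‖ + ∑ j ∈ range m, δ (j + 1) :=
    add_nonneg (norm_nonneg _) (sum_nonneg fun j _ => (norm_nonneg _).trans (hg j))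
  have h := (sum_norm_sq_add_two_inner_add_norm_sq_le (r := fun j => x j - xstar)
    (u := fun j => a (j + 1) • v (j + 1)) (g := fun j => g (j + 1)) (δ := fun j => δ (j + 1))
    (fun j => by simp only [hv]; abel) hg
    (fun j => by simpa only [real_inner_smul_left] using hN j) m).trans (pow_le_pow_left₀ h0 hB 2)
  simp only [norm_smul, norm_of_nonneg (ha _).le, real_inner_smul_left] at h
  rw [sum_add_distrib, ← mul_sum] at h
  have hu := sum_nonneg fun j (_ : j ∈ range m) => sq_nonneg (a (j + 1) * ‖v (j + 1)‖)
  have hi := sum_nonneg fun j (_ : j ∈ range m) => hN j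
  refine ⟨by nlinarith [sq_nonneg ‖x m - xstar‖], by nlinarith [sq_nonneg ‖x m - xstar‖], ?_⟩
  nlinarith [norm_nonneg (x m - xstar)]

theorem ConvexOn.map_centerMass_sub_le {ι : Type*} {s : Set E} {F : E → ℝ} (hF : ConvexOn ℝ s F)
    {t : Finset ι} {w : ι → ℝ} {z : ι → E} (hw : ∀ i ∈ t, 0 < w i) (ht : t.Nonempty)
    (hz : ∀ i ∈ t, z i ∈ s) (m : ℝ) :
    F (t.centerMass w z) - m ≤ (∑ i ∈ t, w i * (F (z i) - m)) / ∑ i ∈ t, w i := by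
  have hW : 0 < ∑ i ∈ t, w i := sum_pos hw ht
  have h : F (t.centerMass w z) ≤ (∑ i ∈ t, w i * F (z i)) / ∑ i ∈ t, w i :=
    (hF.map_centerMass_le (fun i hi => (hw i hi).le) hW hz).trans_eq
      (by simp only [centerMass, Function.comp, smul_eq_mul, inv_mul_eq_div])
  rw [le_div_iff₀ hW, sum_congr rfl fun i _ => mul_sub (w i) (F (z i)) m, sum_sub_distrib,
    ← sum_mul]
  rw [le_div_iff₀ hW] at h
  linarith

end InnerProductSpace

section StepRule

variable {q C : ℝ} {a G : ℕ → ℝ}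

theorem sum_log_eq_of_step_rule (hq : 0 < q) (hC : 0 < C) (hG : ∀ j, 0 < G j)
    (hrule : ∀ j, a (j + 1) = (1 / (2 * G j)) ^ ((q - 1) / q) * C ^ (1 / q)) (k : ℕ) :
    ∑ j ∈ range k, log (a (j + 1)) = k * log C - (q - 1) * (k * log 2 +
      ∑ j ∈ range k, log (a (j + 1) * G (j + 1)) + log (G 0) - log (G k)) := by
  have hlog : ∀ j, q * log (a (j + 1)) = log C - (q - 1) * (log 2 + log (G j)) := by
    intro j
    have h2G : 0 < 1 / (2 * G j) := by have := hG j; positivity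
    rw [hrule, log_mul (rpow_pos_of_pos h2G _).ne' (rpow_pos_of_pos hC _).ne', log_rpow h2G,
      log_rpow hC, one_div, log_inv, log_mul two_ne_zero (hG j).ne']
    field_simp
    ring
  have ha : ∀ j, a (j + 1) ≠ 0 := fun j => by
    rw [hrule]; have := hG j; positivity
  have hsplit : ∑ j ∈ range k, log (a (j + 1) * G (j + 1)) =
      ∑ j ∈ range k, log (a (j + 1)) + ∑ j ∈ range k, log (G (j + 1)) := by
    rw [← sum_add_distrib]
    exact sum_congr rfl fun j _ => log_mul (ha j) (hG (j + 1)).ne'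
  have htel := sum_range_sub (fun j => log (G j)) k
  have hsum : q * ∑ j ∈ range k, log (a (j + 1)) =
      k * log C - (q - 1) * (k * log 2 + ∑ j ∈ range k, log (G j)) := by
    rw [mul_sum, sum_congr rfl fun j _ => hlog j, sum_sub_distrib, ← mul_sum, sum_add_distrib]
    simp
  rw [sum_sub_distrib] at htel
  linear_combination hsum + (q - 1) * hsplit + (q - 1) * htel

theorem mul_rpow_le_sum_of_step_rule (hq : 1 ≤ q) (hC : 0 < C) (hG : ∀ j, 0 < G j)
    (hrule : ∀ j, a (j + 1) = (1 / (2 * G j)) ^ ((q - 1) / q) * C ^ (1 / q))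
    {R : ℝ} (hR : 0 < R) {k : ℕ} (hk : 0 < k)
    (hsq : ∑ j ∈ range k, (a (j + 1) * G (j + 1)) ^ 2 ≤ R ^ 2)
    (hGk : G 0 ≤ exp k * G k) :
    C * (k : ℝ) ^ ((q + 1) / 2) ≤
      2 ^ (q - 1) * exp (q - 1) * R ^ (q - 1) * ∑ j ∈ range k, a (j + 1) := by
  have ha : ∀ j, 0 < a (j + 1) := fun j => by rw [hrule]; have := hG j; positivity
  have hU : ∀ j, 0 < a (j + 1) * G (j + 1) := fun j => mul_pos (ha j) (hG (j + 1))
  have hk' : (0 : ℝ) < k := by exact_mod_cast hk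
  have hne : (range k).Nonempty := nonempty_range_iff.2 hk.ne'
  set A := ∑ j ∈ range k, a (j + 1) with hA_def
  have hA : 0 < A := sum_pos (fun j _ => ha j) hne
  have hLA := sum_log_eq_of_step_rule (by linarith) hC hG hrule k
  have hamgm_a : ∑ j ∈ range k, log (a (j + 1)) ≤ k * (log A - log k) := by
    have h := sum_log_le_card_mul_log_sum_div_card hne (fun j _ => ha j)
    rwa [← hA_def, card_range, log_div hA.ne' hk'.ne'] at h
  have hamgm_u : 2 * ∑ j ∈ range k, log (a (j + 1) * G (j + 1)) ≤ k * (2 * log R - log k) := by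
    have h := sum_log_le_card_mul_log_sum_div_card hne (fun j _ => pow_pos (hU j) 2)
    simp only [log_pow, card_range, Nat.cast_ofNat, ← mul_sum] at h
    refine h.trans (mul_le_mul_of_nonneg_left ?_ hk'.le)
    rw [← log_rpow hR, ← log_div (by positivity) hk'.ne', rpow_two]
    exact log_le_log (div_pos (sum_pos (fun j _ => pow_pos (hU j) 2) hne) hk')
      (div_le_div_of_nonneg_right hsq hk'.le)
  have hratio : log (G 0) - log (G k) ≤ k := by
    have := log_le_log (hG 0) hGk
    rw [log_mul (exp_pos _).ne' (hG k).ne', log_exp] at this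
    linarith
  have hkey : k * (log C + (q + 1) / 2 * log k) ≤ k * ((q - 1) * (log 2 + 1 + log R) + log A) := by
    nlinarith [mul_le_mul_of_nonneg_left hratio (by linarith : 0 ≤ q - 1)]
  replace hkey := le_of_mul_le_mul_left hkey hk'
  rw [← log_le_log_iff (by positivity) (by positivity), log_mul hC.ne' (by positivity),
    log_rpow hk', log_mul (by positivity) hA.ne', log_mul (by positivity) (by positivity),
    log_mul (by positivity) (by positivity), log_rpow two_pos, log_exp, log_rpow hR]
  linarith

end StepRule

theorem le_exp_mul_of_log_mul_div_le {G₀ G R ε t : ℝ} (hG₀ : 0 < G₀) (hG : 0 < G) (hε : 0 < ε)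
    (hεG : ε ≤ G * R) (hlog : log (G₀ * R / ε) ≤ t) : G₀ ≤ exp t * G := by
  have hR : 0 < R := pos_of_mul_pos_right (hε.trans_le hεG) hG.le
  rw [log_le_iff_le_exp (by positivity), div_le_iff₀ hε] at hlog
  have := mul_le_mul_of_nonneg_left hεG (exp_pos t).le
  nlinarith

theorem half_sq_div_le_of_factorial_div_mul_le {p : ℕ} (hp : 2 ≤ p) {L R κ A : ℝ} (hL : 0 < L)
    (hR : 0 < R) (hκ : 0 < κ) (hA : 0 < A)
    (h : p.factorial / ((p + 1) * L) * κ ≤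
      2 ^ ((p : ℝ) - 1) * exp ((p : ℝ) - 1) * R ^ ((p : ℝ) - 1) * A) :
    R ^ 2 / 2 / A ≤
      L * R ^ (p + 1) / κ * ((p + 1) * 2 ^ (p - 2) * exp ((p : ℝ) - 1) / p.factorial) := by
  rw [show (2 : ℝ) ^ ((p : ℝ) - 1) = 2 * 2 ^ (p - 2) by
      rw [← pow_succ', ← rpow_natCast]; congr 1; push_cast [Nat.cast_sub hp]; ring,
    show R ^ ((p : ℝ) - 1) = R ^ (p - 1) by
      rw [← rpow_natCast, Nat.cast_sub (by omega : 1 ≤ p), Nat.cast_one]] at h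
  rw [div_le_iff₀ hA]
  refine le_trans (le_of_eq ?_) (mul_le_mul_of_nonneg_left ((div_le_iff₀' ?_).2 h) ?_)
  · rw [show p + 1 = 2 + (p - 1) by omega, pow_add]
    field_simp
  all_goals positivity

theorem inexact_prox_final_complexity_general
    {E : Type*} [NormedAddCommGroup E] [InnerProductSpace ℝ E]
    (p : ℕ) (hp : 2 ≤ p) (Lp : ℝ) (hLp : 0 < Lp)
    (F : E → ℝ) (domF : Set E) (hFconv : ConvexOn ℝ domF F)
    (xstar : E) (hxstar : xstar ∈ domF) (hmin : ∀ y ∈ domF, F xstar ≤ F y)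
    (Fstar : ℝ) (hFstar : Fstar = F xstar)
    (x g : ℕ → E) (a δ : ℕ → ℝ)
    (hx : ∀ i, x i ∈ domF)
    (hsub : ∀ i, 1 ≤ i → ∀ y ∈ domF,
      a i * F (x i) + ‖x i - x (i - 1)‖ ^ 2 / 2 + ⟪g i, y - x i⟫ ≤
        a i * F y + ‖y - x (i - 1)‖ ^ 2 / 2)
    (hg : ∀ i, 1 ≤ i → ‖g i‖ ≤ δ i)
    (Fp : ℕ → E) (hFp : ∀ i, 1 ≤ i → Fp i = (a i)⁻¹ • (g i - (x i - x (i - 1))))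
    (hFpne : ∀ i, Fp i ≠ 0)
    (harule : ∀ i : ℕ, a (i + 1) =
      (1 / (2 * ‖Fp i‖)) ^ (((p : ℝ) - 1) / p)
        * ((Nat.factorial p : ℝ) / (((p : ℝ) + 1) * Lp)) ^ ((1 : ℝ) / p))
    (c s : ℝ) (hc : 0 < c) (hs : 1 < s)
    (hδrule : ∀ k : ℕ, 1 ≤ k → δ k = c / (k : ℝ) ^ s)
    (ε : ℝ) (hε : 0 < ε) (K : ℕ)
    (hlower : ∀ k : ℕ, 1 ≤ k → k ≤ K → ε ≤ F (x k) - Fstar)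
    (R : ℝ) (hR : R = ‖x 0 - xstar‖ + c * s / (s - 1)) :
    ∀ k : ℕ, 1 ≤ k → Real.log (‖Fp 0‖ * R / ε) ≤ (k : ℝ) → k ≤ K →
      F ((∑ i ∈ Finset.Icc 1 k, a i)⁻¹ • ∑ i ∈ Finset.Icc 1 k, a i • x i) - Fstar ≤
        Lp * R ^ (p + 1) / (k : ℝ) ^ (((p : ℝ) + 1) / 2)
          * (((p : ℝ) + 1) * 2 ^ (p - 2) * Real.exp ((p : ℝ) - 1)
            / (Nat.factorial p : ℝ)) := by
  intro k hk hklog hkK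
  subst hFstar
  obtain ⟨n, rfl⟩ : ∃ n, k = n + 1 := ⟨k - 1, by omega⟩
  have hG : ∀ i, 0 < ‖Fp i‖ := fun i => norm_pos_iff.2 (hFpne i)
  have ha : ∀ j, 0 < a (j + 1) := fun j => by rw [harule]; have := hG j; positivity
  have hv : ∀ j, a (j + 1) • Fp (j + 1) = g (j + 1) - (x (j + 1) - x j) := fun j => by
    rw [hFp _ (Nat.le_add_left 1 j), Nat.add_sub_cancel, smul_inv_smul₀ (ha j).ne']
  have hgap : ∀ j, F (x (j + 1)) - F xstar ≤ ⟪Fp (j + 1), x (j + 1) - xstar⟫ := fun j =>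
    (isSubgradOn_of_inexact_prox_step hFconv (ha j) (hx _) (hv j)
      (by simpa using hsub _ (Nat.le_add_left 1 j))).sub_le_inner_s18 hxstar
  have hδ : ‖x 0 - xstar‖ + ∑ j ∈ range (n + 1), δ (j + 1) ≤ R := by
    rw [hR, sum_congr rfl fun j _ => hδrule _ (Nat.le_add_left 1 j)]
    gcongr
    exact sum_range_div_natCast_add_one_rpow_le hc.le hs (n + 1)
  obtain ⟨hsq, hS, hr⟩ := inexact_prox_estimates_s18 ha hv (fun j => hg _ (Nat.le_add_left 1 j))
    (fun j => (sub_nonneg.2 (hmin _ (hx _))).trans (hgap j)) hδ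
  have hεR : ε ≤ ‖Fp (n + 1)‖ * R := (hlower _ hk hkK).trans <| (hgap n).trans <|
    (real_inner_le_norm _ _).trans (mul_le_mul_of_nonneg_left hr (norm_nonneg _))
  have hRpos : 0 < R := pos_of_mul_pos_right (hε.trans_le hεR) (hG _).le
  have hA := mul_rpow_le_sum_of_step_rule (by exact_mod_cast (by omega : 1 ≤ p)) (by positivity)
    hG harule hRpos (Nat.succ_pos n) hsq (le_exp_mul_of_log_mul_div_le (hG 0) (hG _) hε hεR hklog)
  rw [sum_Icc_one_eq_sum_range, sum_Icc_one_eq_sum_range]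
  calc _ ≤ (∑ j ∈ range (n + 1), a (j + 1) * (F (x (j + 1)) - F xstar)) /
        ∑ j ∈ range (n + 1), a (j + 1) :=
      hFconv.map_centerMass_sub_le (fun j _ => ha j) nonempty_range_add_one (fun j _ => hx _) _
    _ ≤ R ^ 2 / 2 / ∑ j ∈ range (n + 1), a (j + 1) :=
      div_le_div_of_nonneg_right ((sum_le_sum fun j _ =>
        mul_le_mul_of_nonneg_left (hgap j) (ha j).le).trans hS) (sum_nonneg fun j _ => (ha j).le)
    _ ≤ _ := half_sq_div_le_of_factorial_div_mul_le hp hLp hRpos (by positivity)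
      (sum_pos (fun j _ => ha j) nonempty_range_add_one) hA

/-- Theorem 6.2 of the paper: final complexity of the inexact proximal
scheme. With the step-size rule `a_{i+1} = (1/(2‖F'(x_i)‖))^{(p−1)/p}(p!/((p+1)L_p))^{1/p}`,
accuracies `δ_k = c/k^s` (`c > 0`, `s > 1`), `R = ‖x_0 − x*‖ + cs/(s−1)`, and
`F(x_k) − F* ≥ ε` for `1 ≤ k ≤ K`: for every `k` with
`ln(‖F'(x_0)‖R/ε) ≤ k ≤ K`, the averaged point `x̄_k` satisfies
`F(x̄_k) − F* ≤ (L_p R^{p+1}/k^{(p+1)/2})·((p+1)2^{p−2}e^{p−1}/p!)`. -/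
theorem inexact_prox_final_complexity
    {E : Type*} [NormedAddCommGroup E] [InnerProductSpace ℝ E] [FiniteDimensional ℝ E]
    (p : ℕ) (hp : 2 ≤ p) (Lp : ℝ) (hLp : 0 < Lp)
    (F : E → ℝ) (domF : Set E) (hFconv : ConvexOn ℝ domF F)
    (hcl : IsClosed domF) (hlsc : LowerSemicontinuousOn F domF)
    (xstar : E) (hxstar : xstar ∈ domF) (hmin : ∀ y ∈ domF, F xstar ≤ F y)
    (Fstar : ℝ) (hFstar : Fstar = F xstar)
    (x g : ℕ → E) (a δ : ℕ → ℝ)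
    (hx : ∀ i, x i ∈ domF)
    (hsub : ∀ i, 1 ≤ i → ∀ y ∈ domF,
      a i * F (x i) + ‖x i - x (i - 1)‖ ^ 2 / 2 + ⟪g i, y - x i⟫ ≤
        a i * F y + ‖y - x (i - 1)‖ ^ 2 / 2)
    (hg : ∀ i, 1 ≤ i → ‖g i‖ ≤ δ i)
    (Fp : ℕ → E) (hFp : ∀ i, 1 ≤ i → Fp i = (a i)⁻¹ • (g i - (x i - x (i - 1))))
    (hFp0 : IsSubgradOn domF F (Fp 0) (x 0))
    (hFpne : ∀ i, Fp i ≠ 0)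
    (harule : ∀ i : ℕ, a (i + 1) =
      (1 / (2 * ‖Fp i‖)) ^ (((p : ℝ) - 1) / p)
        * ((Nat.factorial p : ℝ) / (((p : ℝ) + 1) * Lp)) ^ ((1 : ℝ) / p))
    (c s : ℝ) (hc : 0 < c) (hs : 1 < s)
    (hδrule : ∀ k : ℕ, 1 ≤ k → δ k = c / (k : ℝ) ^ s)
    (ε : ℝ) (hε : 0 < ε) (K : ℕ)
    (hlower : ∀ k : ℕ, 1 ≤ k → k ≤ K → ε ≤ F (x k) - Fstar)
    (R : ℝ) (hR : R = ‖x 0 - xstar‖ + c * s / (s - 1)) :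
    ∀ k : ℕ, 1 ≤ k → Real.log (‖Fp 0‖ * R / ε) ≤ (k : ℝ) → k ≤ K →
      F ((∑ i ∈ Finset.Icc 1 k, a i)⁻¹ • ∑ i ∈ Finset.Icc 1 k, a i • x i) - Fstar ≤
        Lp * R ^ (p + 1) / (k : ℝ) ^ (((p : ℝ) + 1) / 2)
          * (((p : ℝ) + 1) * 2 ^ (p - 2) * Real.exp ((p : ℝ) - 1)
            / (Nat.factorial p : ℝ)) :=
  inexact_prox_final_complexity_general p hp Lp hLp F domF hFconv xstar hxstar hmin Fstar hFstar x g
    a δ hx hsub hg Fp hFp hFpne harule c s hc hs hδrule ε hε K hlower R hR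
end
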